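/- arXiv:2308.11603 — 4 statements merged into one kernel-verified Lean document; each statement's English description precedes it below -/
import Mathlib

section
/- For every Morse gauge M there exists a constant δ = δ(M) ≥ 0 with the following property: if X is a geodesic metric space, p and q are M-Morse geodesics in X with common initial point p₋ = q₋, and r is any geodesic in X from the terminal point p₊ of p to the terminal point q₊ of q, then the geodesic triangle p ∪ q ∪ r is δ-thin. -/
open Set

/-- The word length of `g` with respect to a (symmetrised) generating set `S`. -/
noncomputable def wordLength {G : Type*} [Group G] (S : Set G) (g : G) : ℕ :=
  sInf {n | ∃ l : List G, (∀ x ∈ l, x ∈ S ∨ x⁻¹ ∈ S) ∧ l.length = n ∧ l.prod = g}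

/-- The word metric on `G` with respect to `S` (the vertex metric of `Cay(G,S)`). -/
noncomputable def wordDist {G : Type*} [Group G] (S : Set G) (g h : G) : ℝ :=
  (wordLength S (g⁻¹ * h) : ℝ)

/-- `S` is a finite generating set of `G`. -/
def IsFinGenSet {G : Type*} [Group G] (S : Set G) : Prop :=
  S.Finite ∧ Subgroup.closure S = ⊤

/-- A Morse gauge: a non-negative function `ℝ≥1 × ℝ≥0 → ℝ≥0`, non-decreasing in
both variables. -/
def IsMorseGauge (M : ℝ → ℝ → ℝ) : Prop :=
  (∀ l c : ℝ, 1 ≤ l → 0 ≤ c → 0 ≤ M l c) ∧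
  (∀ l₁ c₁ l₂ c₂ : ℝ, 1 ≤ l₁ → 0 ≤ c₁ → l₁ ≤ l₂ → c₁ ≤ c₂ → M l₁ c₁ ≤ M l₂ c₂)

/-- `γ` is a `(lam, c)`-quasigeodesic on the set of parameters `I`, with respect to the
distance function `d`. -/
def IsQuasigeodesicOn {X : Type*} (d : X → X → ℝ) (γ : ℝ → X) (I : Set ℝ)
    (lam c : ℝ) : Prop :=
  ∀ s ∈ I, ∀ t ∈ I, |s - t| / lam - c ≤ d (γ s) (γ t) ∧ d (γ s) (γ t) ≤ lam * |s - t| + c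

/-- `γ` is a geodesic (parametrised by arclength) on the set of parameters `I`. -/
def IsGeodesicOn {X : Type*} (d : X → X → ℝ) (γ : ℝ → X) (I : Set ℝ) : Prop :=
  ∀ s ∈ I, ∀ t ∈ I, d (γ s) (γ t) = |s - t|

/-- The Hausdorff distance between `A` and `B` (w.r.t. the distance function `d`)
is at most `r`. -/
def HausdorffLE {X : Type*} (d : X → X → ℝ) (A B : Set X) (r : ℝ) : Prop :=
  (∀ a ∈ A, ∃ b ∈ B, d a b ≤ r) ∧ (∀ b ∈ B, ∃ a ∈ A, d a b ≤ r)

/-- `γ` is `M`-Morse on the parameter interval `I`: any `(lam,c)`-quasigeodesic with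
endpoints on `γ` stays within Hausdorff distance `M lam c` of the corresponding
segment of `γ`. -/
def IsMorseOn {X : Type*} (d : X → X → ℝ) (γ : ℝ → X) (I : Set ℝ)
    (M : ℝ → ℝ → ℝ) : Prop :=
  ∀ lam c : ℝ, 1 ≤ lam → 0 ≤ c → ∀ t₁ ∈ I, ∀ t₂ ∈ I, t₁ ≤ t₂ →
    ∀ (η : ℝ → X) (a b : ℝ), a ≤ b → IsQuasigeodesicOn d η (Icc a b) lam c →
      η a = γ t₁ → η b = γ t₂ →
      HausdorffLE d (γ '' Icc t₁ t₂) (η '' Icc a b) (M lam c)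

/-- `γ` is an `(M; lam, c)`-Morse quasigeodesic on `I`. -/
def IsMorseQuasigeodesicOn {X : Type*} (d : X → X → ℝ) (γ : ℝ → X) (I : Set ℝ)
    (M : ℝ → ℝ → ℝ) (lam c : ℝ) : Prop :=
  IsQuasigeodesicOn d γ I lam c ∧ IsMorseOn d γ I M

/-- The Morse local-to-global property for the space `X` with distance function `d`:
local Morse quasigeodesics (at a sufficiently large scale) are global Morse
quasigeodesics. -/
def MorseLocalToGlobal {X : Type*} (d : X → X → ℝ) : Prop :=
  ∀ M : ℝ → ℝ → ℝ, IsMorseGauge M → ∀ lam c : ℝ, 1 ≤ lam → 0 ≤ c →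
    ∃ L > (0 : ℝ), ∃ M' : ℝ → ℝ → ℝ, IsMorseGauge M' ∧ ∃ lam' ≥ (1 : ℝ), ∃ c' ≥ (0 : ℝ),
      ∀ (γ : ℝ → X) (a b : ℝ), a ≤ b →
        (∀ t₁ t₂ : ℝ, a ≤ t₁ → t₁ ≤ t₂ → t₂ ≤ b → t₂ - t₁ ≤ L →
          IsMorseQuasigeodesicOn d γ (Icc t₁ t₂) M lam c) →
        IsMorseQuasigeodesicOn d γ (Icc a b) M' lam' c'

/-- A discrete geodesic of length `n` in the Cayley graph of `(G,S)`. -/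
def IsGeodesicSeq {G : Type*} [Group G] (S : Set G) (γ : ℕ → G) (n : ℕ) : Prop :=
  ∀ i ≤ n, ∀ j ≤ n, wordDist S (γ i) (γ j) = |(i : ℝ) - (j : ℝ)|

/-- A discrete path in the Cayley graph of `(G,S)` is `M`-Morse. -/
def IsMorseSeq {G : Type*} [Group G] (S : Set G) (γ : ℕ → G) (n : ℕ)
    (M : ℝ → ℝ → ℝ) : Prop :=
  ∀ lam c : ℝ, 1 ≤ lam → 0 ≤ c → ∀ i j : ℕ, i ≤ j → j ≤ n →
    ∀ (η : ℝ → G) (a b : ℝ), a ≤ b →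
      IsQuasigeodesicOn (wordDist S) η (Icc a b) lam c →
      η a = γ i → η b = γ j →
      HausdorffLE (wordDist S) (γ '' {k : ℕ | i ≤ k ∧ k ≤ j}) (η '' Icc a b) (M lam c)

/-- `H` is an `(M,μ)`-stable subgroup of `G` with respect to the finite generating set
`S`: every geodesic of `Cay(G,S)` with endpoints in `H` is `M`-Morse and lies in the
`μ`-neighbourhood of `H`. -/
def IsStableSubgroupWith {G : Type*} [Group G] (S : Set G) (H : Subgroup G)
    (M : ℝ → ℝ → ℝ) (μ : ℝ) : Prop :=
  IsMorseGauge M ∧ 0 ≤ μ ∧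
  ∀ (γ : ℕ → G) (n : ℕ), IsGeodesicSeq S γ n → γ 0 ∈ H → γ n ∈ H →
    IsMorseSeq S γ n M ∧ ∀ i ≤ n, ∃ h ∈ H, wordDist S (γ i) h ≤ μ

/-- `H` is a stable subgroup of `G` (this is independent of the choice of finite
generating set). -/
def IsStableSubgroup {G : Type*} [Group G] (H : Subgroup G) : Prop :=
  ∃ S : Set G, IsFinGenSet S ∧ ∃ (M : ℝ → ℝ → ℝ) (μ : ℝ), IsStableSubgroupWith S H M μ

/-- A finitely generated group has the Morse local-to-global property if its Cayley
graph with respect to a finite generating set does. -/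
def HasMLTG (G : Type*) [Group G] : Prop :=
  ∃ S : Set G, IsFinGenSet S ∧ MorseLocalToGlobal (wordDist S)

/-- A subset `U` of a group `G` is separable if it is closed in the profinite topology:
for every `g ∉ U` there is a finite-index subgroup `N` with `gN ∩ U = ∅`. -/
def SeparableSubset {G : Type*} [Group G] (U : Set G) : Prop :=
  ∀ g : G, g ∉ U → ∃ N : Subgroup G, N.FiniteIndex ∧ ∀ h ∈ N, g * h ∉ U

/-- The setwise (ordered) product of a finite family of subsets of a group. -/
def setProd {G : Type*} [Group G] {n : ℕ} (A : Fin n → Set G) : Set G :=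
  {g : G | ∃ x : Fin n → G, (∀ i, x i ∈ A i) ∧ (List.ofFn x).prod = g}

/-- The Gromov product `⟨x,y⟩_z` with respect to the distance function `d`. -/
noncomputable def gromovProd {X : Type*} (d : X → X → ℝ) (z x y : X) : ℝ :=
  (d z x + d z y - d x y) / 2

/-- A geodesic metric space: any two points are joined by a geodesic. -/
def IsGeodesicSpace (X : Type*) [MetricSpace X] : Prop :=
  ∀ x y : X, ∃ γ : ℝ → X, γ 0 = x ∧ γ (dist x y) = y ∧
    IsGeodesicOn dist γ (Icc 0 (dist x y))

/-- A subgroup `H ≤ G` is undistorted: for any finite generating sets `T` of `H` and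
`S` of `G`, the inclusion `(H,d_T) → (G,d_S)` is a quasi-isometric embedding. -/
def Undistorted {G : Type*} [Group G] (H : Subgroup G) : Prop :=
  ∀ (T : Set H) (S : Set G), IsFinGenSet T → IsFinGenSet S →
    ∃ lam ≥ (1 : ℝ), ∃ c ≥ (0 : ℝ), ∀ x y : H,
      wordDist S (x : G) (y : G) / lam - c ≤ wordDist T x y ∧
      wordDist T x y ≤ lam * wordDist S (x : G) (y : G) + c

universe u

/-- Auxiliary: a geodesic `g` from a point `o` (almost) closest to the geodesic `r`,
concatenated with a piece of `r`, is a `(3,1)`-quasigeodesic. -/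
lemma concat_quasigeodesic {X : Type*} [MetricSpace X] (g r : ℝ → X) (m lr T : ℝ)
    (ψ : ℝ → ℝ) (hm : 0 ≤ m) (hT : 0 ≤ T)
    (hg : IsGeodesicOn dist g (Icc 0 m))
    (hr : IsGeodesicOn dist r (Icc 0 lr))
    (hψ : ∀ u v : ℝ, |ψ u - ψ v| = |u - v|)
    (hψrange : ∀ u ∈ Icc m (m + T), ψ u ∈ Icc 0 lr)
    (hgm : g m = r (ψ m))
    (hlow : ∀ s ∈ Icc 0 lr, m - 1 ≤ dist (g 0) (r s)) :
    IsQuasigeodesicOn dist (fun u => if u ≤ m then g u else r (ψ u)) (Icc 0 (m + T)) 3 1 := by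
  have key : ∀ s ∈ Icc 0 (m + T), ∀ t ∈ Icc 0 (m + T), s ≤ t →
      |s - t| / 3 - 1 ≤ dist (if s ≤ m then g s else r (ψ s)) (if t ≤ m then g t else r (ψ t)) ∧
      dist (if s ≤ m then g s else r (ψ s)) (if t ≤ m then g t else r (ψ t)) ≤ 3 * |s - t| + 1 := by
    intro s hs t ht hst
    by_cases htm : t ≤ m
    · have hsm : s ≤ m := le_trans hst htm
      rw [if_pos hsm, if_pos htm, hg s ⟨hs.1, hsm⟩ t ⟨ht.1, htm⟩]
      constructor <;> linarith [abs_nonneg (s - t)]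
    · by_cases hsm : s ≤ m
      · -- mixed case
        rw [if_pos hsm, if_neg htm]
        have htm' : m < t := lt_of_not_ge htm
        have htI : ψ t ∈ Icc 0 lr := hψrange t ⟨le_of_lt htm', ht.2⟩
        have hmI : ψ m ∈ Icc 0 lr := hψrange m ⟨le_rfl, by linarith⟩
        have habs : |s - t| = t - s := by
          rw [abs_sub_comm]; exact abs_of_nonneg (by linarith)
        have e1 : dist (g m) (r (ψ t)) = t - m := by
          rw [hgm, hr (ψ m) hmI (ψ t) htI, hψ m t, abs_sub_comm]
          exact abs_of_nonneg (by linarith)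
        have e2 : dist (g s) (g m) = m - s := by
          rw [hg s ⟨hs.1, hsm⟩ m ⟨hm, le_rfl⟩, abs_sub_comm]
          exact abs_of_nonneg (by linarith)
        have e3 : dist (g 0) (g s) = s := by
          rw [hg 0 ⟨le_rfl, hm⟩ s ⟨hs.1, hsm⟩, abs_sub_comm, sub_zero]
          exact abs_of_nonneg hs.1
        have l0 := hlow (ψ t) htI
        have tri1 := dist_triangle (g 0) (g s) (r (ψ t))
        have tri2 := dist_triangle (g m) (g s) (r (ψ t))
        have tri3 := dist_triangle (g s) (g m) (r (ψ t))
        have e2' : dist (g m) (g s) = m - s := by rw [dist_comm]; exact e2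
        rw [habs]
        constructor
        · rcases le_total (t - m) (2 * (m - s)) with hc | hc <;> linarith
        · linarith
      · -- both on r part
        rw [if_neg hsm, if_neg htm]
        have hsm' : m < s := lt_of_not_ge hsm
        have hsI : ψ s ∈ Icc 0 lr := hψrange s ⟨le_of_lt hsm', hs.2⟩
        have htI : ψ t ∈ Icc 0 lr := hψrange t ⟨by linarith [lt_of_not_ge htm], ht.2⟩
        rw [hr (ψ s) hsI (ψ t) htI, hψ s t]
        constructor <;> linarith [abs_nonneg (s - t)]
  intro s hs t ht
  rcases le_total s t with h | h
  · exact key s hs t ht h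
  · have H := key t ht s hs h
    dsimp only
    rw [dist_comm, abs_sub_comm]
    exact H

/-- **Lemma (thin triangles for Morse geodesics).**
For every Morse gauge `M` there is `δ = δ(M) ≥ 0` such that in any geodesic metric
space, a geodesic triangle two of whose sides (issuing from a common vertex) are
`M`-Morse geodesics is `δ`-thin. -/
theorem morse_thin_triangles (M : ℝ → ℝ → ℝ) (hM : IsMorseGauge M) :
    ∃ δ ≥ (0 : ℝ), ∀ (X : Type u) [MetricSpace X], IsGeodesicSpace X →
      ∀ (p q r : ℝ → X) (lp lq lr : ℝ), 0 ≤ lp → 0 ≤ lq → 0 ≤ lr →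
        IsGeodesicOn dist p (Set.Icc 0 lp) → IsMorseOn dist p (Set.Icc 0 lp) M →
        IsGeodesicOn dist q (Set.Icc 0 lq) → IsMorseOn dist q (Set.Icc 0 lq) M →
        IsGeodesicOn dist r (Set.Icc 0 lr) →
        p 0 = q 0 → r 0 = p lp → r lr = q lq →
        ((∀ t ∈ Set.Icc 0 lp, ∃ x ∈ q '' Set.Icc 0 lq ∪ r '' Set.Icc 0 lr, dist (p t) x ≤ δ) ∧
         (∀ t ∈ Set.Icc 0 lq, ∃ x ∈ p '' Set.Icc 0 lp ∪ r '' Set.Icc 0 lr, dist (q t) x ≤ δ) ∧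
         (∀ t ∈ Set.Icc 0 lr, ∃ x ∈ p '' Set.Icc 0 lp ∪ q '' Set.Icc 0 lq, dist (r t) x ≤ δ)) := by
  have hM31 : (0 : ℝ) ≤ M 3 1 := hM.1 3 1 (by norm_num) (by norm_num)
  refine ⟨2 * M 3 1, by linarith, ?_⟩
  intro X _i hX p q r lp lq lr hlp hlq hlr hp hpM hq hqM hr hpq hrp hrq
  -- pick an (almost) closest point `r s₀` on `r` to `o = p 0`
  have hne : ((fun s => dist (p 0) (r s)) '' Icc 0 lr).Nonempty :=
    ⟨dist (p 0) (r 0), 0, ⟨le_rfl, hlr⟩, rfl⟩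
  have hbdd : BddBelow ((fun s => dist (p 0) (r s)) '' Icc 0 lr) :=
    ⟨0, by rintro z ⟨s, hs, rfl⟩; exact dist_nonneg⟩
  obtain ⟨z, ⟨s₀, hs₀, rfl⟩, hz⟩ :=
    exists_lt_of_csInf_lt hne (lt_add_one (sInf ((fun s => dist (p 0) (r s)) '' Icc 0 lr)))
  obtain ⟨g, hg0, hgend, hg⟩ := hX (p 0) (r s₀)
  set m := dist (p 0) (r s₀) with hmdef
  have hm : 0 ≤ m := dist_nonneg
  have hgm : g m = r s₀ := hgend
  have hlow : ∀ s ∈ Icc 0 lr, m - 1 ≤ dist (g 0) (r s) := by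
    intro s hs
    have h1 : sInf ((fun s => dist (p 0) (r s)) '' Icc 0 lr) ≤ dist (p 0) (r s) :=
      csInf_le hbdd ⟨s, hs, rfl⟩
    rw [hg0]
    linarith
  -- the two concatenated (3,1)-quasigeodesics
  have hqg2 : IsQuasigeodesicOn dist (fun u => if u ≤ m then g u else r (s₀ + m - u))
      (Icc 0 (m + s₀)) 3 1 := by
    have := concat_quasigeodesic g r m lr s₀ (fun u => s₀ + m - u) hm hs₀.1 hg hr
      (fun u v => by rw [show s₀ + m - u - (s₀ + m - v) = v - u by ring, abs_sub_comm])
      (fun u hu => ⟨by linarith [hu.2], by linarith [hu.1, hs₀.2]⟩)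
      (by rw [show s₀ + m - m = s₀ by ring]; exact hgm) hlow
    exact this
  have hqg1 : IsQuasigeodesicOn dist (fun u => if u ≤ m then g u else r (s₀ + (u - m)))
      (Icc 0 (m + (lr - s₀))) 3 1 := by
    have := concat_quasigeodesic g r m lr (lr - s₀) (fun u => s₀ + (u - m)) hm
      (by linarith [hs₀.2]) hg hr
      (fun u v => by rw [show s₀ + (u - m) - (s₀ + (v - m)) = u - v by ring])
      (fun u hu => ⟨by linarith [hu.1, hs₀.1], by linarith [hu.2]⟩)
      (by rw [show s₀ + (m - m) = s₀ by ring]; exact hgm) hlow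
    exact this
  -- endpoints
  have hη2a : (fun u => if u ≤ m then g u else r (s₀ + m - u)) 0 = p 0 := by
    simp only [if_pos hm]; exact hg0
  have hη2b : (fun u => if u ≤ m then g u else r (s₀ + m - u)) (m + s₀) = p lp := by
    by_cases hc : m + s₀ ≤ m
    · have hs00 : s₀ = 0 := le_antisymm (by linarith) hs₀.1
      simp only [if_pos hc]
      rw [show m + s₀ = m by rw [hs00]; ring, hgm, hs00]
      exact hrp
    · simp only [if_neg hc]
      rw [show s₀ + m - (m + s₀) = 0 by ring]
      exact hrp
  have hη1a : (fun u => if u ≤ m then g u else r (s₀ + (u - m))) 0 = q 0 := by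
    simp only [if_pos hm]
    rw [hg0]; exact hpq
  have hη1b : (fun u => if u ≤ m then g u else r (s₀ + (u - m))) (m + (lr - s₀)) = q lq := by
    by_cases hc : m + (lr - s₀) ≤ m
    · have hs0l : s₀ = lr := le_antisymm hs₀.2 (by linarith)
      simp only [if_pos hc]
      rw [show m + (lr - s₀) = m by rw [hs0l]; ring, hgm, hs0l]
      exact hrq
    · simp only [if_neg hc]
      rw [show s₀ + (m + (lr - s₀) - m) = lr by ring]
      exact hrq
  -- Morse property applications
  have Hp := hpM 3 1 (by norm_num) (by norm_num) 0 ⟨le_rfl, hlp⟩ lp ⟨hlp, le_rfl⟩ hlp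
    _ 0 (m + s₀) (by linarith [hs₀.1]) hqg2 hη2a hη2b
  have Hq := hqM 3 1 (by norm_num) (by norm_num) 0 ⟨le_rfl, hlq⟩ lq ⟨hlq, le_rfl⟩ hlq
    _ 0 (m + (lr - s₀)) (by linarith [hs₀.2]) hqg1 hη1a hη1b
  refine ⟨?_, ?_, ?_⟩
  · -- p side
    intro t ht
    obtain ⟨b, hb, hdb⟩ := Hp.1 (p t) ⟨t, ht, rfl⟩
    obtain ⟨u, hu, rfl⟩ := hb
    by_cases hum : u ≤ m
    · have hdb' : dist (p t) (g u) ≤ M 3 1 := by simpa [if_pos hum] using hdb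
      have hmem : u ∈ Icc 0 (m + (lr - s₀)) := ⟨hu.1, by linarith [hs₀.2]⟩
      obtain ⟨a, ha, hda⟩ := Hq.2 (g u) ⟨u, hmem, by simp [if_pos hum]⟩
      refine ⟨a, Or.inl ha, ?_⟩
      calc dist (p t) a ≤ dist (p t) (g u) + dist (g u) a := dist_triangle _ _ _
        _ ≤ M 3 1 + M 3 1 := by rw [dist_comm (g u) a]; exact add_le_add hdb' hda
        _ = 2 * M 3 1 := by ring
    · have hum' : m < u := lt_of_not_ge hum
      have harg : s₀ + m - u ∈ Icc 0 lr := ⟨by linarith [hu.2], by linarith [hs₀.2]⟩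
      have hdb' : dist (p t) (r (s₀ + m - u)) ≤ M 3 1 := by simpa [if_neg hum] using hdb
      exact ⟨r (s₀ + m - u), Or.inr ⟨_, harg, rfl⟩, by linarith⟩
  · -- q side
    intro t ht
    obtain ⟨b, hb, hdb⟩ := Hq.1 (q t) ⟨t, ht, rfl⟩
    obtain ⟨u, hu, rfl⟩ := hb
    by_cases hum : u ≤ m
    · have hdb' : dist (q t) (g u) ≤ M 3 1 := by simpa [if_pos hum] using hdb
      have hmem : u ∈ Icc 0 (m + s₀) := ⟨hu.1, by linarith [hs₀.1]⟩
      obtain ⟨a, ha, hda⟩ := Hp.2 (g u) ⟨u, hmem, by simp [if_pos hum]⟩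
      refine ⟨a, Or.inl ha, ?_⟩
      calc dist (q t) a ≤ dist (q t) (g u) + dist (g u) a := dist_triangle _ _ _
        _ ≤ M 3 1 + M 3 1 := by rw [dist_comm (g u) a]; exact add_le_add hdb' hda
        _ = 2 * M 3 1 := by ring
    · have hum' : m < u := lt_of_not_ge hum
      have harg : s₀ + (u - m) ∈ Icc 0 lr := ⟨by linarith [hs₀.1], by linarith [hu.2]⟩
      have hdb' : dist (q t) (r (s₀ + (u - m))) ≤ M 3 1 := by simpa [if_neg hum] using hdb
      exact ⟨r (s₀ + (u - m)), Or.inr ⟨_, harg, rfl⟩, by linarith⟩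
  · -- r side
    intro t ht
    by_cases hts : t ≤ s₀
    · have hu : m + (s₀ - t) ∈ Icc 0 (m + s₀) := ⟨by linarith, by linarith [ht.1]⟩
      have hval : (fun u => if u ≤ m then g u else r (s₀ + m - u)) (m + (s₀ - t)) = r t := by
        by_cases hc : m + (s₀ - t) ≤ m
        · have hts' : t = s₀ := le_antisymm hts (by linarith)
          simp only [if_pos hc]
          rw [show m + (s₀ - t) = m by rw [hts']; ring, hgm, hts']
        · simp only [if_neg hc]
          congr 1; ring
      obtain ⟨a, ha, hda⟩ := Hp.2 (r t) ⟨_, hu, hval⟩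
      exact ⟨a, Or.inl ha, by rw [dist_comm]; linarith⟩
    · have hts' : s₀ < t := lt_of_not_ge hts
      have hu : m + (t - s₀) ∈ Icc 0 (m + (lr - s₀)) := ⟨by linarith, by linarith [ht.2]⟩
      have hval : (fun u => if u ≤ m then g u else r (s₀ + (u - m))) (m + (t - s₀)) = r t := by
        simp only [if_neg (show ¬ (m + (t - s₀) ≤ m) from fun h => hts (by linarith))]
        congr 1; ring
      obtain ⟨a, ha, hda⟩ := Hq.2 (r t) ⟨_, hu, hval⟩
      exact ⟨a, Or.inr ha, by rw [dist_comm]; linarith⟩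
end

section
/- Let X be a geodesic metric space with the Morse local-to-global property, let M be a Morse gauge, and let ε > 0. There exist constants B ≥ 0, λ ≥ 1, c ≥ 0 and a Morse gauge N (depending only on X, M and ε) such that the following holds: for every n and every concatenation p = p₁ ∗ p₂ ∗ ⋯ ∗ pₙ of M-Morse geodesics in X, where pᵢ goes from aᵢ to aᵢ₊₁, if the length ℓ(pᵢ) > B for all i = 2, …, n−1 and the Gromov product satisfies ⟨a_{i−1}, a_{i+1}⟩_{aᵢ} ≤ ε for all i = 2, …, n, then p is an (N;λ,c)-Morse quasigeodesic. -/
open Set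

/-! ### Auxiliary lemmas for the concatenation theorem -/

lemma mg_hausdorffLE_mono {X : Type*} (d : X → X → ℝ) {A B : Set X} {r r' : ℝ}
    (hrr : r ≤ r') (h : HausdorffLE d A B r) : HausdorffLE d A B r' := by
  obtain ⟨h1, h2⟩ := h
  constructor
  · intro a ha
    obtain ⟨b, hb, hd⟩ := h1 a ha
    exact ⟨b, hb, hd.trans hrr⟩
  · intro b hb
    obtain ⟨a, ha, hd⟩ := h2 b hb
    exact ⟨a, ha, hd.trans hrr⟩

lemma mg_core_low (lam c dd A₁ A₂ : ℝ) (hlam : 1 ≤ lam) (hc : 0 ≤ c)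
    (hA₁ : 0 ≤ A₁) (hA₂ : 0 ≤ A₂) (hd : 0 ≤ dd)
    (h1 : A₁ - 1 ≤ dd) (h2 : A₂ / lam - c - A₁ ≤ dd) :
    (A₁ + A₂) / (3 * lam) - (c + 1) ≤ dd := by
  have hl0 : (0:ℝ) < lam := by linarith
  have h2'' : A₂ / lam ≤ dd + c + A₁ := by linarith
  have h2' : A₂ ≤ (dd + c + A₁) * lam := (div_le_iff₀ hl0).mp h2''
  rw [sub_le_iff_le_add, div_le_iff₀ (by linarith : (0:ℝ) < 3 * lam)]
  nlinarith [mul_le_mul_of_nonneg_right (show A₁ ≤ dd + 1 by linarith) (le_of_lt hl0),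
    mul_nonneg (sub_nonneg.mpr hlam) hd, mul_nonneg (sub_nonneg.mpr hlam) hc]

lemma mg_core_high (lam c dd A₁ A₂ : ℝ) (hlam : 1 ≤ lam) (hc : 0 ≤ c)
    (hA₁ : 0 ≤ A₁) (hA₂ : 0 ≤ A₂)
    (h : dd ≤ A₁ + (lam * A₂ + c)) :
    dd ≤ 3 * lam * (A₁ + A₂) + (c + 1) := by
  nlinarith [mul_nonneg (sub_nonneg.mpr hlam) hA₁, mul_nonneg (sub_nonneg.mpr hlam) hA₂,
    mul_nonneg (show (0:ℝ) ≤ lam by linarith) hA₂,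
    mul_nonneg (show (0:ℝ) ≤ lam by linarith) hA₁]

lemma mg_qg_weaken {dd x lam c lam' c' : ℝ} (hlam : 0 < lam) (h2 : lam ≤ lam')
    (h3 : c ≤ c') (hx : 0 ≤ x) (hl : x / lam - c ≤ dd) (hu : dd ≤ lam * x + c) :
    x / lam' - c' ≤ dd ∧ dd ≤ lam' * x + c' := by
  have hlam' : 0 < lam' := lt_of_lt_of_le hlam h2
  constructor
  · have hdiv : x / lam' ≤ x / lam := by
      rw [div_le_div_iff₀ hlam' hlam]
      nlinarith
    linarith
  · nlinarith [mul_le_mul_of_nonneg_right h2 hx]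

/-- Concatenating a quasigeodesic with a geodesic heading to a point `g 0` that is
(almost) closest to the quasigeodesic yields a quasigeodesic (geodesic appended second). -/
lemma mg_concat_geo_second {X : Type*} [MetricSpace X] (η g : ℝ → X)
    (a m D R lam c : ℝ) (hlam : 1 ≤ lam) (hc : 0 ≤ c) (ham : a ≤ m) (hD0 : 0 ≤ D)
    (hqg : IsQuasigeodesicOn dist η (Icc a m) lam c)
    (hg : IsGeodesicOn dist g (Icc 0 D))
    (hgD : g D = η m)
    (hR : ∀ s ∈ Icc a m, R ≤ dist (η s) (g 0))
    (hDR : D ≤ R + 1) :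
    IsQuasigeodesicOn dist (fun t => if t ≤ m then η t else g (m + D - t))
      (Icc a (m + D)) (3 * lam) (c + 1) := by
  have hl0 : (0:ℝ) < lam := by linarith
  have key : ∀ s ∈ Icc a (m + D), ∀ t ∈ Icc a (m + D), s ≤ t →
      |s - t| / (3 * lam) - (c + 1) ≤
        dist (if s ≤ m then η s else g (m + D - s)) (if t ≤ m then η t else g (m + D - t)) ∧
      dist (if s ≤ m then η s else g (m + D - s)) (if t ≤ m then η t else g (m + D - t)) ≤
        3 * lam * |s - t| + (c + 1) := by
    intro s hs t ht hst
    by_cases htm : t ≤ m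
    · rw [if_pos (le_trans hst htm), if_pos htm]
      have h := hqg s ⟨hs.1, le_trans hst htm⟩ t ⟨ht.1, htm⟩
      exact mg_qg_weaken hl0 (by linarith) (by linarith) (abs_nonneg _) h.1 h.2
    · by_cases hsm : s ≤ m
      · rw [if_pos hsm, if_neg htm]
        have htm' : m < t := not_le.mp htm
        have hgmem : m + D - t ∈ Icc (0:ℝ) D := ⟨by linarith [ht.2], by linarith⟩
        have hd0' : dist (g (m + D - t)) (g 0) = m + D - t := by
          rw [hg _ hgmem 0 ⟨le_rfl, hD0⟩, sub_zero, abs_of_nonneg hgmem.1]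
        have hdm : dist (g (m + D - t)) (η m) = t - m := by
          rw [← hgD, hg _ hgmem D ⟨hD0, le_rfl⟩, abs_of_nonpos (by linarith)]
          ring
        have hsmem : s ∈ Icc a m := ⟨hs.1, hsm⟩
        have hqgsm := hqg s hsmem m ⟨ham, le_rfl⟩
        have habs2 : |s - m| = m - s := by rw [abs_of_nonpos (by linarith)]; ring
        rw [habs2] at hqgsm
        have hd1 : (t - m) - 1 ≤ dist (η s) (g (m + D - t)) := by
          have htr := dist_triangle (η s) (g (m + D - t)) (g 0)
          have hrs := hR s hsmem
          linarith
        have hcm : dist (η m) (g (m + D - t)) = t - m := by rw [dist_comm]; exact hdm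
        have hd2 : (m - s) / lam - c - (t - m) ≤ dist (η s) (g (m + D - t)) := by
          have htr := dist_triangle (η s) (g (m + D - t)) (η m)
          linarith [hqgsm.1]
        have hd3 : dist (η s) (g (m + D - t)) ≤ (t - m) + (lam * (m - s) + c) := by
          have htr := dist_triangle (η s) (η m) (g (m + D - t))
          linarith [hqgsm.2]
        have hsum : |s - t| = (t - m) + (m - s) := by
          rw [abs_of_nonpos (by linarith)]; ring
        constructor
        · have := mg_core_low lam c _ (t - m) (m - s) hlam hc (by linarith) (by linarith)
            dist_nonneg hd1 hd2
          rw [hsum]; linarith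
        · have := mg_core_high lam c _ (t - m) (m - s) hlam hc (by linarith) (by linarith) hd3
          rw [hsum]; linarith
      · rw [if_neg hsm, if_neg htm]
        push_neg at hsm htm
        have h1 : m + D - s ∈ Icc (0:ℝ) D := ⟨by linarith [hs.2], by linarith⟩
        have h2 : m + D - t ∈ Icc (0:ℝ) D := ⟨by linarith [ht.2], by linarith⟩
        rw [hg _ h1 _ h2, show m + D - s - (m + D - t) = t - s by ring, abs_sub_comm]
        exact mg_qg_weaken one_pos (by linarith) (by linarith : (0:ℝ) ≤ c + 1)
          (abs_nonneg _) (by simp) (by simp)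
  intro s hs t ht
  dsimp only
  rcases le_total s t with h | h
  · exact key s hs t ht h
  · obtain ⟨k1, k2⟩ := key t ht s hs h
    rw [dist_comm, abs_sub_comm] at k1 k2
    exact ⟨k1, k2⟩

/-- As above, with the geodesic prepended first. -/
lemma mg_concat_geo_first {X : Type*} [MetricSpace X] (η g : ℝ → X)
    (m b D R lam c : ℝ) (hlam : 1 ≤ lam) (hc : 0 ≤ c) (hmb : m ≤ b) (hD0 : 0 ≤ D)
    (hqg : IsQuasigeodesicOn dist η (Icc m b) lam c)
    (hg : IsGeodesicOn dist g (Icc 0 D))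
    (hgD : g D = η m)
    (hR : ∀ s ∈ Icc m b, R ≤ dist (η s) (g 0))
    (hDR : D ≤ R + 1) :
    IsQuasigeodesicOn dist (fun t => if t ≤ m then g (t - m + D) else η t)
      (Icc (m - D) b) (3 * lam) (c + 1) := by
  have hl0 : (0:ℝ) < lam := by linarith
  have key : ∀ s ∈ Icc (m - D) b, ∀ t ∈ Icc (m - D) b, s ≤ t →
      |s - t| / (3 * lam) - (c + 1) ≤
        dist (if s ≤ m then g (s - m + D) else η s) (if t ≤ m then g (t - m + D) else η t) ∧
      dist (if s ≤ m then g (s - m + D) else η s) (if t ≤ m then g (t - m + D) else η t) ≤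
        3 * lam * |s - t| + (c + 1) := by
    intro s hs t ht hst
    by_cases hsm : s ≤ m
    · by_cases htm : t ≤ m
      · rw [if_pos hsm, if_pos htm]
        have h1 : s - m + D ∈ Icc (0:ℝ) D := ⟨by linarith [hs.1], by linarith⟩
        have h2 : t - m + D ∈ Icc (0:ℝ) D := ⟨by linarith [ht.1], by linarith⟩
        rw [hg _ h1 _ h2, show s - m + D - (t - m + D) = s - t by ring]
        exact mg_qg_weaken one_pos (by linarith) (by linarith : (0:ℝ) ≤ c + 1)
          (abs_nonneg _) (by simp) (by simp)
      · rw [if_pos hsm, if_neg htm]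
        have htm' : m < t := not_le.mp htm
        have hgmem : s - m + D ∈ Icc (0:ℝ) D := ⟨by linarith [hs.1], by linarith⟩
        have hd0' : dist (g (s - m + D)) (g 0) = s - m + D := by
          rw [hg _ hgmem 0 ⟨le_rfl, hD0⟩, sub_zero, abs_of_nonneg hgmem.1]
        have hdm : dist (g (s - m + D)) (η m) = m - s := by
          rw [← hgD, hg _ hgmem D ⟨hD0, le_rfl⟩, abs_of_nonpos (by linarith)]; ring
        have htmem : t ∈ Icc m b := ⟨le_of_lt htm', ht.2⟩
        have hqgmt := hqg m ⟨le_rfl, hmb⟩ t htmem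
        have habs2 : |m - t| = t - m := by rw [abs_of_nonpos (by linarith)]; ring
        rw [habs2] at hqgmt
        have hd1 : (m - s) - 1 ≤ dist (g (s - m + D)) (η t) := by
          have htr := dist_triangle (η t) (g (s - m + D)) (g 0)
          have hrt := hR t htmem
          have hcm : dist (η t) (g (s - m + D)) = dist (g (s - m + D)) (η t) := dist_comm _ _
          linarith
        have hcm : dist (η m) (g (s - m + D)) = m - s := by rw [dist_comm]; exact hdm
        have hd2 : (t - m) / lam - c - (m - s) ≤ dist (g (s - m + D)) (η t) := by
          have htr := dist_triangle (η m) (g (s - m + D)) (η t)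
          linarith [hqgmt.1]
        have hd3 : dist (g (s - m + D)) (η t) ≤ (m - s) + (lam * (t - m) + c) := by
          have htr := dist_triangle (g (s - m + D)) (η m) (η t)
          linarith [hqgmt.2, hdm]
        have hsum : |s - t| = (m - s) + (t - m) := by
          rw [abs_of_nonpos (by linarith)]; ring
        constructor
        · have := mg_core_low lam c _ (m - s) (t - m) hlam hc (by linarith) (by linarith)
            dist_nonneg hd1 hd2
          rw [hsum]; linarith
        · have := mg_core_high lam c _ (m - s) (t - m) hlam hc (by linarith) (by linarith) hd3
          rw [hsum]; linarith
    · rw [if_neg hsm, if_neg (by push_neg at hsm; exact not_le.mpr (lt_of_lt_of_le hsm hst))]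
      push_neg at hsm
      have h := hqg s ⟨le_of_lt hsm, hs.2⟩ t ⟨le_trans (le_of_lt hsm) hst, ht.2⟩
      exact mg_qg_weaken hl0 (by linarith) (by linarith) (abs_nonneg _) h.1 h.2
  intro s hs t ht
  dsimp only
  rcases le_total s t with h | h
  · exact key s hs t ht h
  · obtain ⟨k1, k2⟩ := key t ht s hs h
    rw [dist_comm, abs_sub_comm] at k1 k2
    exact ⟨k1, k2⟩

lemma mg_gp_points {X : Type*} [MetricSpace X] (p : ℝ → X) (e₀ σ e₁ ε : ℝ)
    (hgeoL : IsGeodesicOn dist p (Icc e₀ σ)) (hgeoR : IsGeodesicOn dist p (Icc σ e₁))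
    (h01 : e₀ ≤ σ) (h12 : σ ≤ e₁)
    (hgp : gromovProd dist (p σ) (p e₀) (p e₁) ≤ ε) :
    ∀ u ∈ Icc e₀ σ, ∀ v ∈ Icc σ e₁, (σ - u) + (v - σ) - 2 * ε ≤ dist (p u) (p v) := by
  intro u hu v hv
  have h1 : dist (p σ) (p e₀) = σ - e₀ := by
    rw [hgeoL σ ⟨h01, le_rfl⟩ e₀ ⟨le_rfl, h01⟩]
    exact abs_of_nonneg (by linarith)
  have h2 : dist (p σ) (p e₁) = e₁ - σ := by
    rw [hgeoR σ ⟨le_rfl, h12⟩ e₁ ⟨h12, le_rfl⟩, abs_of_nonpos (by linarith)]; ring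
  have h3 : dist (p e₀) (p u) = u - e₀ := by
    rw [hgeoL e₀ ⟨le_rfl, h01⟩ u hu, abs_of_nonpos (by linarith [hu.1])]; ring
  have h4 : dist (p v) (p e₁) = e₁ - v := by
    rw [hgeoR v hv e₁ ⟨h12, le_rfl⟩, abs_of_nonpos (by linarith [hv.2])]; ring
  have hg : dist (p σ) (p e₀) + dist (p σ) (p e₁) - dist (p e₀) (p e₁) ≤ 2 * ε := by
    simp only [gromovProd] at hgp
    linarith
  have t1 := dist_triangle (p e₀) (p u) (p v)
  have t2 := dist_triangle (p e₀) (p v) (p e₁)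
  linarith [hu.2, hv.1]

lemma mg_singleton_window {X : Type*} [MetricSpace X] (M : ℝ → ℝ → ℝ)
    (hM : IsMorseGauge M) (ε : ℝ) (hε : 0 < ε) (p : ℝ → X) (t : ℝ) :
    IsMorseQuasigeodesicOn dist p (Icc t t)
      (fun lam c => M lam c + 5 * M (3 * lam) (c + 1) + lam ^ 2 * c + c + 4 * ε + 2)
      1 (2 * ε) := by
  constructor
  · intro u hu v hv
    have hu' : u = t := le_antisymm hu.2 hu.1
    have hv' : v = t := le_antisymm hv.2 hv.1
    subst hu'; subst hv'
    rw [sub_self, abs_zero, dist_self]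
    norm_num
    linarith
  · intro lam c hlam hc u₁ hu₁ u₂ hu₂ h12 η a b hab hqg ha hb
    dsimp only
    have hu₁' : u₁ = t := le_antisymm hu₁.2 hu₁.1
    have hu₂' : u₂ = t := le_antisymm hu₂.2 hu₂.1
    rw [hu₁'] at ha
    rw [hu₂'] at hb
    rw [hu₁', hu₂']
    have hK0 : 0 ≤ M (3 * lam) (c + 1) := hM.1 _ _ (by linarith) (by linarith)
    have hM0 : 0 ≤ M lam c := hM.1 _ _ hlam hc
    have hl2c : 0 ≤ lam ^ 2 * c := mul_nonneg (sq_nonneg _) hc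
    have hl0 : (0:ℝ) < lam := by linarith
    have hdab : dist (η a) (η b) = 0 := by rw [ha, hb, dist_self]
    have hba : b - a ≤ lam * c := by
      have h := (hqg a ⟨le_rfl, hab⟩ b ⟨hab, le_rfl⟩).1
      rw [hdab] at h
      have habs : |a - b| = b - a := by rw [abs_of_nonpos (by linarith)]; ring
      rw [habs] at h
      have h2 : (b - a) / lam ≤ c := by linarith
      have := (div_le_iff₀ hl0).mp h2
      nlinarith
    constructor
    · rintro x ⟨u, hu, rfl⟩
      have hu' : u = t := le_antisymm hu.2 hu.1
      rw [hu']
      refine ⟨η a, ⟨a, ⟨le_rfl, hab⟩, rfl⟩, ?_⟩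
      rw [ha, dist_self]
      linarith
    · rintro y ⟨x, hx, rfl⟩
      refine ⟨p t, ⟨t, ⟨le_rfl, le_rfl⟩, rfl⟩, ?_⟩
      have h1 := (hqg a ⟨le_rfl, hab⟩ x hx).2
      have habs : |a - x| ≤ b - a := by
        rw [abs_of_nonpos (by linarith [hx.1])]
        linarith [hx.2]
      have h2 : dist (η a) (η x) ≤ lam * (b - a) + c := by
        nlinarith [mul_le_mul_of_nonneg_left habs (le_of_lt hl0)]
      have h3 : dist (η a) (η x) ≤ lam ^ 2 * c + c := by nlinarith
      rw [← ha]
      linarith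

lemma mg_pure_window {X : Type*} [MetricSpace X] (M : ℝ → ℝ → ℝ) (hM : IsMorseGauge M)
    (ε : ℝ) (hε : 0 < ε) (p : ℝ → X) (e₀ e₁ t₁ t₂ : ℝ)
    (hgeo : IsGeodesicOn dist p (Icc e₀ e₁)) (hmor : IsMorseOn dist p (Icc e₀ e₁) M)
    (h1 : e₀ ≤ t₁) (h3 : t₂ ≤ e₁) :
    IsMorseQuasigeodesicOn dist p (Icc t₁ t₂)
      (fun lam c => M lam c + 5 * M (3 * lam) (c + 1) + lam ^ 2 * c + c + 4 * ε + 2)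
      1 (2 * ε) := by
  have hsub : Icc t₁ t₂ ⊆ Icc e₀ e₁ := Icc_subset_Icc h1 h3
  constructor
  · intro u hu v hv
    rw [hgeo u (hsub hu) v (hsub hv)]
    constructor
    · rw [div_one]
      linarith
    · rw [one_mul]
      linarith
  · intro lam c hlam hc u₁ hu₁ u₂ hu₂ h12 η a b hab hqg ha hb
    dsimp only
    have hK0 : 0 ≤ M (3 * lam) (c + 1) := hM.1 _ _ (by linarith) (by linarith)
    have hl2c : 0 ≤ lam ^ 2 * c := mul_nonneg (sq_nonneg _) hc
    exact mg_hausdorffLE_mono dist (by linarith)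
      (hmor lam c hlam hc u₁ (hsub hu₁) u₂ (hsub hu₂) h12 η a b hab hqg ha hb)

lemma mg_corner_window {X : Type*} [MetricSpace X] (hX : IsGeodesicSpace X)
    (M : ℝ → ℝ → ℝ) (hM : IsMorseGauge M) (ε : ℝ) (hε : 0 < ε)
    (p : ℝ → X) (e₀ σ e₁ t₁ t₂ : ℝ)
    (h01 : e₀ ≤ σ) (h12 : σ ≤ e₁)
    (hgeoL : IsGeodesicOn dist p (Icc e₀ σ)) (hmorL : IsMorseOn dist p (Icc e₀ σ) M)
    (hgeoR : IsGeodesicOn dist p (Icc σ e₁)) (hmorR : IsMorseOn dist p (Icc σ e₁) M)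
    (hgp : gromovProd dist (p σ) (p e₀) (p e₁) ≤ ε)
    (ht₁ : e₀ ≤ t₁) (ht₁σ : t₁ ≤ σ) (hσt₂ : σ ≤ t₂) (ht₂ : t₂ ≤ e₁) :
    IsMorseQuasigeodesicOn dist p (Icc t₁ t₂)
      (fun lam c => M lam c + 5 * M (3 * lam) (c + 1) + lam ^ 2 * c + c + 4 * ε + 2)
      1 (2 * ε) := by
  have hGP := mg_gp_points p e₀ σ e₁ ε hgeoL hgeoR h01 h12 hgp
  constructor
  · -- quasigeodesic property of the window
    have key : ∀ u v, t₁ ≤ u → u ≤ v → v ≤ t₂ →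
        (v - u) - 2 * ε ≤ dist (p u) (p v) ∧ dist (p u) (p v) ≤ v - u := by
      intro u v hu huv hv
      rcases le_total v σ with hvσ | hσv
      · have hd := hgeoL u ⟨le_trans ht₁ hu, le_trans huv hvσ⟩
          v ⟨le_trans ht₁ (le_trans hu huv), hvσ⟩
        have habs : |u - v| = v - u := by rw [abs_of_nonpos (by linarith)]; ring
        rw [hd, habs]
        constructor <;> linarith
      · rcases le_total σ u with hσu | huσ
        · have hd := hgeoR u ⟨hσu, by linarith⟩ v ⟨hσv, by linarith⟩
          have habs : |u - v| = v - u := by rw [abs_of_nonpos (by linarith)]; ring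
          rw [hd, habs]
          constructor <;> linarith
        · have low := hGP u ⟨by linarith, huσ⟩ v ⟨hσv, by linarith⟩
          have u1 : dist (p u) (p σ) = σ - u := by
            rw [hgeoL u ⟨by linarith, huσ⟩ σ ⟨h01, le_rfl⟩, abs_of_nonpos (by linarith)]
            ring
          have u2 : dist (p σ) (p v) = v - σ := by
            rw [hgeoR σ ⟨le_rfl, h12⟩ v ⟨hσv, by linarith⟩, abs_of_nonpos (by linarith)]
            ring
          have tr := dist_triangle (p u) (p σ) (p v)
          constructor
          · linarith
          · linarith
    intro u hu v hv
    rcases le_total u v with h | h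
    · obtain ⟨k1, k2⟩ := key u v hu.1 h hv.2
      have habs : |u - v| = v - u := by rw [abs_of_nonpos (by linarith)]; ring
      rw [habs]
      constructor
      · rw [div_one]; linarith
      · rw [one_mul]; linarith
    · obtain ⟨k1, k2⟩ := key v u hv.1 h hu.2
      have habs : |u - v| = u - v := abs_of_nonneg (by linarith)
      rw [habs, dist_comm]
      constructor
      · rw [div_one]; linarith
      · rw [one_mul]; linarith
  · -- Morse property of the window
    intro lam c hlam hc u₁ hu₁ u₂ hu₂ hu12 η a b hab hqg ha hb
    dsimp only
    have hK0 : 0 ≤ M (3 * lam) (c + 1) := hM.1 _ _ (by linarith) (by linarith)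
    have hM0 : 0 ≤ M lam c := hM.1 _ _ hlam hc
    have hl2c : 0 ≤ lam ^ 2 * c := mul_nonneg (sq_nonneg _) hc
    by_cases hcase1 : u₂ ≤ σ
    · exact mg_hausdorffLE_mono dist (by linarith)
        (hmorL lam c hlam hc u₁ ⟨by linarith [hu₁.1], by linarith⟩ u₂
          ⟨by linarith [hu₂.1], hcase1⟩ hu12 η a b hab hqg ha hb)
    by_cases hcase2 : σ ≤ u₁
    · exact mg_hausdorffLE_mono dist (by linarith)
        (hmorR lam c hlam hc u₁ ⟨hcase2, by linarith [hu₁.2]⟩ u₂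
          ⟨by linarith, by linarith [hu₂.2]⟩ hu12 η a b hab hqg ha hb)
    have hu₁σ : u₁ ≤ σ := le_of_not_ge hcase2
    have hσu₂ : σ ≤ u₂ := le_of_not_ge hcase1
    have hu₁L : u₁ ∈ Icc e₀ σ := ⟨by linarith [hu₁.1], hu₁σ⟩
    have hu₂R : u₂ ∈ Icc σ e₁ := ⟨hσu₂, by linarith [hu₂.2]⟩
    -- the almost-closest point of η to the corner point
    obtain ⟨R, hRdef⟩ : ∃ R : ℝ, R = sInf ((fun x => dist (η x) (p σ)) '' Icc a b) := ⟨_, rfl⟩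
    have hSne : ((fun x => dist (η x) (p σ)) '' Icc a b).Nonempty := ⟨_, ⟨a, ⟨le_rfl, hab⟩, rfl⟩⟩
    have hSbd : BddBelow ((fun x => dist (η x) (p σ)) '' Icc a b) := by
      refine ⟨0, ?_⟩
      rintro _ ⟨x, hx, rfl⟩
      exact dist_nonneg
    have hRle : ∀ x ∈ Icc a b, R ≤ dist (η x) (p σ) := by
      intro x hx
      rw [hRdef]
      exact csInf_le hSbd ⟨x, hx, rfl⟩
    have hR0 : 0 ≤ R := by
      rw [hRdef]
      refine le_csInf hSne ?_
      rintro _ ⟨x, hx, rfl⟩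
      exact dist_nonneg
    obtain ⟨m, hm, hmR⟩ : ∃ x ∈ Icc a b, dist (η x) (p σ) < R + 1 := by
      have hlt : sInf ((fun x => dist (η x) (p σ)) '' Icc a b) < R + 1 := by
        rw [← hRdef]; linarith
      obtain ⟨_, ⟨x, hx, rfl⟩, h⟩ := exists_lt_of_csInf_lt hSne hlt
      exact ⟨x, hx, h⟩
    -- the geodesic from the corner to η m
    obtain ⟨g, hg0, hgD0, hggeo0⟩ := hX (p σ) (η m)
    obtain ⟨D, hDdef⟩ : ∃ D : ℝ, D = dist (p σ) (η m) := ⟨_, rfl⟩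
    rw [← hDdef] at hgD0 hggeo0
    have hD0 : 0 ≤ D := hDdef ▸ dist_nonneg
    have hDR : D ≤ R + 1 := by rw [hDdef, dist_comm]; linarith
    have hgm : ∀ r ∈ Icc (0:ℝ) D, dist (g r) (η m) = D - r := by
      intro r hr
      rw [← hgD0, hggeo0 r hr D ⟨hD0, le_rfl⟩, abs_of_nonpos (by linarith [hr.2])]
      ring
    -- left auxiliary quasigeodesic ζ
    have hqgL : IsQuasigeodesicOn dist η (Icc a m) lam c := by
      intro x hx y hy
      exact hqg x ⟨hx.1, le_trans hx.2 hm.2⟩ y ⟨hy.1, le_trans hy.2 hm.2⟩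
    have hRL : ∀ x ∈ Icc a m, R ≤ dist (η x) (g 0) := by
      intro x hx
      rw [hg0]
      exact hRle x ⟨hx.1, le_trans hx.2 hm.2⟩
    have hζqg := mg_concat_geo_second η g a m D R lam c hlam hc hm.1 hD0 hqgL hggeo0 hgD0 hRL hDR
    obtain ⟨ζ, hζdef⟩ : ∃ f : ℝ → X, f = fun t => if t ≤ m then η t else g (m + D - t) :=
      ⟨_, rfl⟩
    rw [← hζdef] at hζqg
    have hζa : ζ a = p u₁ := by
      simp only [hζdef]
      rw [if_pos hm.1]
      exact ha
    have hζtop : ζ (m + D) = p σ := by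
      simp only [hζdef]
      by_cases hD' : m + D ≤ m
      · rw [if_pos hD']
        have hD'' : D = 0 := le_antisymm (by linarith) hD0
        have hmσ : η m = p σ := by rw [← hgD0, hD'', hg0]
        rw [hD'', add_zero, hmσ]
      · rw [if_neg hD', show m + D - (m + D) = 0 by ring, hg0]
    have HL := hmorL (3 * lam) (c + 1) (by linarith) (by linarith) u₁ hu₁L σ ⟨h01, le_rfl⟩
      hu₁σ ζ a (m + D) (by linarith [hm.1]) hζqg hζa hζtop
    -- right auxiliary quasigeodesic ζ'
    have hqgR : IsQuasigeodesicOn dist η (Icc m b) lam c := by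
      intro x hx y hy
      exact hqg x ⟨le_trans hm.1 hx.1, hx.2⟩ y ⟨le_trans hm.1 hy.1, hy.2⟩
    have hRR : ∀ x ∈ Icc m b, R ≤ dist (η x) (g 0) := by
      intro x hx
      rw [hg0]
      exact hRle x ⟨le_trans hm.1 hx.1, hx.2⟩
    have hζ'qg := mg_concat_geo_first η g m b D R lam c hlam hc hm.2 hD0 hqgR hggeo0 hgD0 hRR hDR
    obtain ⟨ζ', hζ'def⟩ : ∃ f : ℝ → X, f = fun t => if t ≤ m then g (t - m + D) else η t :=
      ⟨_, rfl⟩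
    rw [← hζ'def] at hζ'qg
    have hζ'bot : ζ' (m - D) = p σ := by
      simp only [hζ'def]
      rw [if_pos (by linarith : m - D ≤ m), show m - D - m + D = 0 by ring, hg0]
    have hζ'top : ζ' b = p u₂ := by
      simp only [hζ'def]
      by_cases hbm : b ≤ m
      · have hbm' : b = m := le_antisymm hbm hm.2
        rw [if_pos hbm, hbm', show m - m + D = D by ring, hgD0, ← hbm']
        exact hb
      · rw [if_neg hbm]
        exact hb
    have HR := hmorR (3 * lam) (c + 1) (by linarith) (by linarith) σ ⟨le_rfl, h12⟩ u₂ hu₂R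
      hσu₂ ζ' (m - D) b (by linarith [hm.2]) hζ'qg hζ'bot hζ'top
    -- the bound on R
    have hRd₁ : R ≤ σ - u₁ := by
      have h := hRle a ⟨le_rfl, hab⟩
      rw [ha] at h
      have hd₁ : dist (p u₁) (p σ) = σ - u₁ := by
        rw [hgeoL u₁ hu₁L σ ⟨h01, le_rfl⟩, abs_of_nonpos (by linarith)]
        ring
      linarith
    have hu₀mem : σ - R / 2 ∈ Icc e₀ σ := ⟨by linarith [hu₁L.1], by linarith⟩
    have hu₀Icc : σ - R / 2 ∈ Icc u₁ σ := ⟨by linarith, by linarith⟩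
    have hu₀z : dist (p (σ - R / 2)) (p σ) = R / 2 := by
      rw [hgeoL _ hu₀mem σ ⟨h01, le_rfl⟩, abs_of_nonpos (by linarith)]
      ring
    obtain ⟨v₀, hv₀B, hu₀v⟩ := HL.1 (p (σ - R / 2)) ⟨σ - R / 2, hu₀Icc, rfl⟩
    obtain ⟨tv, htv, rfl⟩ := hv₀B
    have hRbound : R ≤ 4 * M (3 * lam) (c + 1) + 4 * ε := by
      by_cases htvm : tv ≤ m
      · have hζtv : ζ tv = η tv := by
          simp only [hζdef]
          rw [if_pos htvm]
        have h1 := hRle tv ⟨htv.1, le_trans htvm hm.2⟩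
        have tr := dist_triangle (η tv) (p (σ - R / 2)) (p σ)
        have hcm : dist (η tv) (p (σ - R / 2)) = dist (p (σ - R / 2)) (ζ tv) := by
          rw [hζtv, dist_comm]
        linarith
      · push_neg at htvm
        have hζtv : ζ tv = g (m + D - tv) := by
          simp only [hζdef]
          rw [if_neg (not_le.mpr htvm)]
        have hgp' : m + D - tv ∈ Icc (0:ℝ) D := ⟨by linarith [htv.2], by linarith⟩
        have hζ'g : ζ' (m + D - tv + m - D) = g (m + D - tv) := by
          simp only [hζ'def]
          rw [if_pos (by linarith [hgp'.2] : m + D - tv + m - D ≤ m)]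
          congr 1
          ring
        have hmem' : m + D - tv + m - D ∈ Icc (m - D) b :=
          ⟨by linarith [hgp'.1], by linarith [hm.2]⟩
        obtain ⟨w, hwA, hwv⟩ := HR.2 (ζ' (m + D - tv + m - D)) ⟨_, hmem', rfl⟩
        obtain ⟨ρ, hρ, rfl⟩ := hwA
        have hGPa := hGP (σ - R / 2) hu₀mem ρ ⟨hρ.1, le_trans hρ.2 hu₂R.2⟩
        have tr := dist_triangle (p (σ - R / 2)) (ζ tv) (p ρ)
        have hwv' : dist (p ρ) (g (m + D - tv)) ≤ M (3 * lam) (c + 1) := by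
          rw [hζ'g] at hwv
          exact hwv
        have e1 : dist (ζ tv) (p ρ) ≤ M (3 * lam) (c + 1) := by
          rw [hζtv, dist_comm]
          exact hwv'
        linarith [hρ.1]
    have hDbound : D ≤ 4 * M (3 * lam) (c + 1) + 4 * ε + 1 := by linarith
    -- assembling the Hausdorff bound
    constructor
    · rintro x ⟨u, hu, rfl⟩
      rcases le_total u σ with huσ | hσu
      · obtain ⟨v, hvB, hdv⟩ := HL.1 (p u) ⟨u, ⟨hu.1, huσ⟩, rfl⟩
        obtain ⟨tw, htw, rfl⟩ := hvB
        by_cases htwm : tw ≤ m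
        · refine ⟨η tw, ⟨tw, ⟨htw.1, le_trans htwm hm.2⟩, rfl⟩, ?_⟩
          have hζtw : ζ tw = η tw := by
            simp only [hζdef]
            rw [if_pos htwm]
          rw [hζtw] at hdv
          linarith
        · push_neg at htwm
          refine ⟨η m, ⟨m, hm, rfl⟩, ?_⟩
          have hζtw : ζ tw = g (m + D - tw) := by
            simp only [hζdef]
            rw [if_neg (not_le.mpr htwm)]
          have hgm' := hgm (m + D - tw) ⟨by linarith [htw.2], by linarith⟩
          have tr := dist_triangle (p u) (ζ tw) (η m)
          rw [hζtw] at tr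
          rw [hζtw] at hdv
          linarith [htw.2]
      · obtain ⟨v, hvB, hdv⟩ := HR.1 (p u) ⟨u, ⟨hσu, hu.2⟩, rfl⟩
        obtain ⟨tw, htw, rfl⟩ := hvB
        by_cases htwm : tw ≤ m
        · refine ⟨η m, ⟨m, hm, rfl⟩, ?_⟩
          have hζ'tw : ζ' tw = g (tw - m + D) := by
            simp only [hζ'def]
            rw [if_pos htwm]
          have hgm' := hgm (tw - m + D) ⟨by linarith [htw.1], by linarith⟩
          have tr := dist_triangle (p u) (ζ' tw) (η m)
          rw [hζ'tw] at tr
          rw [hζ'tw] at hdv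
          linarith [htw.1]
        · push_neg at htwm
          refine ⟨η tw, ⟨tw, ⟨le_trans hm.1 (le_of_lt htwm), htw.2⟩, rfl⟩, ?_⟩
          have hζ'tw : ζ' tw = η tw := by
            simp only [hζ'def]
            rw [if_neg (not_le.mpr htwm)]
          rw [hζ'tw] at hdv
          linarith
    · rintro y ⟨t, ht, rfl⟩
      rcases le_total t m with htm | htm
      · obtain ⟨x, hxA, hdx⟩ := HL.2 (ζ t) ⟨t, ⟨ht.1, by linarith [hD0]⟩, rfl⟩
        obtain ⟨ux, hux, rfl⟩ := hxA
        have hζt : ζ t = η t := by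
          simp only [hζdef]
          rw [if_pos htm]
        rw [hζt] at hdx
        exact ⟨p ux, ⟨ux, ⟨hux.1, le_trans hux.2 hσu₂⟩, rfl⟩, by linarith⟩
      · obtain ⟨x, hxA, hdx⟩ := HR.2 (ζ' t) ⟨t, ⟨by linarith [hD0], ht.2⟩, rfl⟩
        obtain ⟨ux, hux, rfl⟩ := hxA
        have hζ't : ζ' t = η t := by
          simp only [hζ'def]
          by_cases h' : t ≤ m
          · have htm' : t = m := le_antisymm h' htm
            rw [if_pos h', htm', show m - m + D = D by ring, hgD0]
          · rw [if_neg h']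
        rw [hζ't] at hdx
        exact ⟨p ux, ⟨ux, ⟨le_trans hu₁σ hux.1, hux.2⟩, rfl⟩, by linarith⟩

/-- **Lemma (concatenations of Morse geodesics in MLTG spaces).**
In a geodesic space with the Morse local-to-global property, a concatenation of
`M`-Morse geodesics whose middle segments are longer than `B` and whose Gromov
products at the concatenation points are at most `ε` is a global `(N; λ, c)`-Morse
quasigeodesic, for constants `B, λ, c, N` depending only on `M` and `ε`. -/
theorem concatenation_of_morse_geodesics {X : Type*} [MetricSpace X]
    (hX : IsGeodesicSpace X) (hMLTG : MorseLocalToGlobal (dist : X → X → ℝ))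
    (M : ℝ → ℝ → ℝ) (hM : IsMorseGauge M) (ε : ℝ) (hε : 0 < ε) :
    ∃ B ≥ (0 : ℝ), ∃ lam ≥ (1 : ℝ), ∃ c ≥ (0 : ℝ), ∃ N : ℝ → ℝ → ℝ, IsMorseGauge N ∧
      ∀ (n : ℕ) (s : ℕ → ℝ) (p : ℝ → X),
        (∀ i < n, s i ≤ s (i + 1)) →
        (∀ i < n, IsGeodesicOn dist p (Set.Icc (s i) (s (i + 1))) ∧
                  IsMorseOn dist p (Set.Icc (s i) (s (i + 1))) M) →
        (∀ i : ℕ, 1 ≤ i → i + 1 < n → B < s (i + 1) - s i) →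
        (∀ i : ℕ, 1 ≤ i → i < n →
          gromovProd dist (p (s i)) (p (s (i - 1))) (p (s (i + 1))) ≤ ε) →
        IsMorseQuasigeodesicOn dist p (Set.Icc (s 0) (s n)) N lam c := by
  classical
  have hN₀ : IsMorseGauge
      (fun lam c => M lam c + 5 * M (3 * lam) (c + 1) + lam ^ 2 * c + c + 4 * ε + 2) := by
    constructor
    · intro l c hl hc
      have h1 := hM.1 l c hl hc
      have h2 := hM.1 (3 * l) (c + 1) (by linarith) (by linarith)
      have h3 : 0 ≤ l ^ 2 * c := mul_nonneg (sq_nonneg _) hc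
      dsimp only
      linarith
    · intro l₁ c₁ l₂ c₂ h1 h2 h3 h4
      dsimp only
      have m1 := hM.2 l₁ c₁ l₂ c₂ h1 h2 h3 h4
      have m2 := hM.2 (3 * l₁) (c₁ + 1) (3 * l₂) (c₂ + 1) (by linarith) (by linarith)
        (by linarith) (by linarith)
      have hsq : l₁ ^ 2 ≤ l₂ ^ 2 := by nlinarith
      have m3 : l₁ ^ 2 * c₁ ≤ l₂ ^ 2 * c₂ :=
        mul_le_mul hsq h4 h2 (by nlinarith)
      linarith
  obtain ⟨L, hL, M', hM'g, lam', hlam', c', hc', hglob⟩ :=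
    hMLTG _ hN₀ 1 (2 * ε) le_rfl (by linarith)
  refine ⟨L, le_of_lt hL, lam', hlam', c', hc', M', hM'g, ?_⟩
  intro n s p h1 h2 h3 h4
  have hmono : ∀ j k : ℕ, j ≤ k → k ≤ n → s j ≤ s k := by
    intro j k hjk
    induction k, hjk using Nat.le_induction with
    | base => intro _; exact le_rfl
    | succ k hk ih =>
      intro hkn
      exact le_trans (ih (by omega)) (h1 k (by omega))
  apply hglob p (s 0) (s n) (hmono 0 n (Nat.zero_le n) le_rfl)
  intro t₁ t₂ ht₁ h12 ht₂ hlen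
  rcases Nat.eq_zero_or_pos n with hn0 | hn
  · subst hn0
    have ht : t₂ = t₁ := le_antisymm (le_trans ht₂ ht₁) h12
    subst ht
    exact mg_singleton_window M hM ε hε p t₂
  · have hP0 : s 0 ≤ t₁ := ht₁
    have hi₀n : Nat.findGreatest (fun j => s j ≤ t₁) n ≤ n := Nat.findGreatest_le n
    have hi₀P : s (Nat.findGreatest (fun j => s j ≤ t₁) n) ≤ t₁ :=
      Nat.findGreatest_spec (P := fun j => s j ≤ t₁) (Nat.zero_le n) hP0
    have hgr : ∀ k : ℕ, Nat.findGreatest (fun j => s j ≤ t₁) n < k → k ≤ n → ¬ s k ≤ t₁ :=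
      fun k hk hkn => Nat.findGreatest_is_greatest hk hkn
    obtain ⟨i₀, hi₀def⟩ : ∃ i₀, i₀ = Nat.findGreatest (fun j => s j ≤ t₁) n := ⟨_, rfl⟩
    rw [← hi₀def] at hi₀n hi₀P hgr
    rcases eq_or_lt_of_le hi₀n with heq | hlt
    · -- the window sits at the very end
      rw [heq] at hi₀P
      have h1' : s (n - 1) ≤ t₁ := le_trans (hmono (n - 1) n (Nat.sub_le n 1) le_rfl) hi₀P
      have h3' : t₂ ≤ s (n - 1 + 1) := by
        rw [Nat.sub_add_cancel hn]
        exact ht₂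
      exact mg_pure_window M hM ε hε p (s (n - 1)) (s (n - 1 + 1)) t₁ t₂
        (h2 (n - 1) (by omega)).1 (h2 (n - 1) (by omega)).2 h1' h3'
    · by_cases hpure : t₂ ≤ s (i₀ + 1)
      · exact mg_pure_window M hM ε hε p (s i₀) (s (i₀ + 1)) t₁ t₂
          (h2 i₀ hlt).1 (h2 i₀ hlt).2 hi₀P hpure
      · push_neg at hpure
        have ht₁σ : t₁ ≤ s (i₀ + 1) := le_of_not_ge (hgr (i₀ + 1) (by omega) (by omega))
        have hi1n : i₀ + 1 < n := by
          rcases eq_or_lt_of_le (show i₀ + 1 ≤ n by omega) with he | hl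
          · exfalso
            rw [he] at hpure
            linarith
          · exact hl
        have ht₂e₁ : t₂ ≤ s (i₀ + 2) := by
          rcases eq_or_lt_of_le (show i₀ + 2 ≤ n by omega) with he | hl
          · rw [he]
            exact ht₂
          · have hgap := h3 (i₀ + 1) (by omega) (by omega)
            linarith
        have hgp := h4 (i₀ + 1) (by omega) hi1n
        have hidx : i₀ + 1 - 1 = i₀ := by omega
        rw [hidx] at hgp
        exact mg_corner_window hX M hM ε hε p (s i₀) (s (i₀ + 1)) (s (i₀ + 2)) t₁ t₂
          (h1 i₀ (by omega)) (h1 (i₀ + 1) hi1n)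
          (h2 i₀ (by omega)).1 (h2 i₀ (by omega)).2
          (h2 (i₀ + 1) hi1n).1 (h2 (i₀ + 1) hi1n).2
          hgp hi₀P ht₁σ (le_of_lt hpure) ht₂e₁
end

section
/- Let G be a finitely generated group and let H ≤ G be a stable subgroup. Then H is finitely generated, and H is undistorted in G, i.e., for any choice of finite generating sets T of H and S of G the inclusion map (H, d_T) → (G, d_S) is a quasi-isometric embedding. -/
open Set

section WL
variable {G : Type*} [Group G] {S : Set G}

lemma wordLength_le {g : G} {l : List G} (h1 : ∀ x ∈ l, x ∈ S ∨ x⁻¹ ∈ S)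
    (h2 : l.prod = g) : wordLength S g ≤ l.length :=
  Nat.sInf_le ⟨l, h1, rfl, h2⟩

lemma wordLength_spec (hS : Subgroup.closure S = ⊤) (g : G) :
    ∃ l : List G, (∀ x ∈ l, x ∈ S ∨ x⁻¹ ∈ S) ∧ l.length = wordLength S g ∧ l.prod = g := by
  have hg : g ∈ Submonoid.closure (S ∪ S⁻¹) := by
    rw [← Subgroup.closure_toSubmonoid]
    exact (hS ▸ Subgroup.mem_top g : g ∈ Subgroup.closure S)
  obtain ⟨l, hl, hpr⟩ := Submonoid.exists_list_of_mem_closure hg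
  have hl' : ∀ x ∈ l, x ∈ S ∨ x⁻¹ ∈ S := by
    intro x hx
    rcases hl x hx with h | h
    · exact Or.inl h
    · exact Or.inr (Set.mem_inv.mp h)
  have hne : {n | ∃ l : List G, (∀ x ∈ l, x ∈ S ∨ x⁻¹ ∈ S) ∧ l.length = n ∧ l.prod = g}.Nonempty :=
    ⟨l.length, l, hl', rfl, hpr⟩
  exact Nat.sInf_mem hne

lemma wordLength_one : wordLength S (1 : G) = 0 :=
  Nat.le_zero.mp (wordLength_le (l := []) (by simp) (by simp))

lemma wordLength_inv_le (hS : Subgroup.closure S = ⊤) (g : G) :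
    wordLength S g⁻¹ ≤ wordLength S g := by
  obtain ⟨l, hl, hlen, hpr⟩ := wordLength_spec hS g
  have : ((l.map (fun x => x⁻¹)).reverse).prod = g⁻¹ := by
    rw [← List.prod_inv_reverse, hpr]
  have hm : ∀ x ∈ (l.map (fun x => x⁻¹)).reverse, x ∈ S ∨ x⁻¹ ∈ S := by
    intro x hx
    rw [List.mem_reverse, List.mem_map] at hx
    obtain ⟨y, hy, rfl⟩ := hx
    rcases hl y hy with h | h
    · exact Or.inr (by simpa using h)
    · exact Or.inl h
  calc wordLength S g⁻¹ ≤ ((l.map (fun x => x⁻¹)).reverse).length := wordLength_le hm this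
  _ = l.length := by simp
  _ = wordLength S g := hlen

lemma wordLength_inv (hS : Subgroup.closure S = ⊤) (g : G) :
    wordLength S g⁻¹ = wordLength S g :=
  le_antisymm (wordLength_inv_le hS g) (by simpa using wordLength_inv_le hS g⁻¹)

lemma wordLength_mul_le (hS : Subgroup.closure S = ⊤) (g h : G) :
    wordLength S (g * h) ≤ wordLength S g + wordLength S h := by
  obtain ⟨l, hl, hlen, hpr⟩ := wordLength_spec hS g
  obtain ⟨m, hm, hmlen, hmpr⟩ := wordLength_spec hS h
  calc wordLength S (g * h) ≤ (l ++ m).length := by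
        refine wordLength_le ?_ (by simp [hpr, hmpr])
        intro x hx
        rcases List.mem_append.mp hx with h' | h'
        · exact hl x h'
        · exact hm x h'
  _ = wordLength S g + wordLength S h := by simp [hlen, hmlen]

/-- Finiteness of balls. -/
lemma finite_words (hfin : S.Finite) (N : ℕ) :
    {g : G | ∃ l : List G, (∀ x ∈ l, x ∈ S ∨ x⁻¹ ∈ S) ∧ l.length ≤ N ∧ l.prod = g}.Finite := by
  induction N with
  | zero =>
    refine Set.Finite.subset (Set.finite_singleton (1 : G)) ?_
    rintro g ⟨l, -, hlen, hpr⟩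
    have : l = [] := List.length_eq_zero_iff.mp (Nat.le_zero.mp hlen)
    simp [this] at hpr
    simp [← hpr]
  | succ N ih =>
    set W := {g : G | ∃ l : List G, (∀ x ∈ l, x ∈ S ∨ x⁻¹ ∈ S) ∧ l.length ≤ N ∧ l.prod = g}
    refine Set.Finite.subset ((ih.union (Set.Finite.image2 (fun a b => a * b) ih
      (hfin.union hfin.inv)))) ?_
    rintro g ⟨l, hl, hlen, hpr⟩
    rcases eq_or_ne l [] with rfl | hne
    · exact Or.inl ⟨[], by simp, by simp, by simpa using hpr⟩
    · right
      refine Set.mem_image2.mpr ⟨l.dropLast.prod, ?_, l.getLast hne, ?_, ?_⟩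
      · refine ⟨l.dropLast, fun x hx => hl x ((l.dropLast_sublist).subset hx), ?_, rfl⟩
        have := l.length_dropLast
        have hlpos : 0 < l.length := List.length_pos_iff.mpr hne
        omega
      · rcases hl _ (l.getLast_mem hne) with h | h
        · exact Or.inl h
        · exact Or.inr (Set.mem_inv.mpr (by simpa using h))
      · calc l.dropLast.prod * l.getLast hne = (l.dropLast ++ [l.getLast hne]).prod := by simp
          _ = g := by rw [l.dropLast_append_getLast hne, hpr]

lemma finite_ball (hS : Subgroup.closure S = ⊤) (hfin : S.Finite) (N : ℕ) :
    {g : G | wordLength S g ≤ N}.Finite := by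
  refine Set.Finite.subset (finite_words hfin N) ?_
  intro g hg
  obtain ⟨l, hl, hlen, hpr⟩ := wordLength_spec hS g
  exact ⟨l, hl, hlen ▸ hg, hpr⟩

/-- Existence of discrete geodesics. -/
lemma exists_geodesic_seq (hS : Subgroup.closure S = ⊤) (g h : G) :
    ∃ γ : ℕ → G, γ 0 = g ∧ γ (wordLength S (g⁻¹ * h)) = h ∧
      IsGeodesicSeq S γ (wordLength S (g⁻¹ * h)) := by
  set n := wordLength S (g⁻¹ * h) with hn
  obtain ⟨l, hl, hlen, hpr⟩ := wordLength_spec hS (g⁻¹ * h)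
  refine ⟨fun i => g * (l.take i).prod, by simp, ?_, ?_⟩
  · have : l.take n = l := List.take_of_length_le (by omega)
    simp [this, hpr]
  · -- upper bound lemma
    have key : ∀ i j : ℕ, i ≤ j → j ≤ n →
        wordLength S ((g * (l.take i).prod)⁻¹ * (g * (l.take j).prod)) ≤ j - i := by
      intro i j hij hjn
      have hdec : l.take j = l.take i ++ (l.drop i).take (j - i) := by
        rw [← List.take_add]
        congr 1
        omega
      have hval : (g * (l.take i).prod)⁻¹ * (g * (l.take j).prod)
          = ((l.drop i).take (j - i)).prod := by
        rw [hdec, List.prod_append]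
        group
      rw [hval]
      have hmem : ∀ x ∈ (l.drop i).take (j - i), x ∈ S ∨ x⁻¹ ∈ S := fun x hx =>
        hl x ((l.drop_subset i) ((List.take_subset _ _) hx))
      calc wordLength S ((l.drop i).take (j - i)).prod ≤ ((l.drop i).take (j - i)).length :=
            wordLength_le hmem rfl
      _ ≤ j - i := by simp [List.length_take, List.length_drop]
    have keyeq : ∀ i j : ℕ, i ≤ j → j ≤ n →
        wordLength S ((g * (l.take i).prod)⁻¹ * (g * (l.take j).prod)) = j - i := by
      intro i j hij hjn
      refine le_antisymm (key i j hij hjn) ?_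
      have h1 := key 0 i (Nat.zero_le _) (le_trans hij hjn)
      have h2 := key i j hij hjn
      have h3 := key j n hjn le_rfl
      have hsplit : (g⁻¹ * h) =
          ((g * (l.take 0).prod)⁻¹ * (g * (l.take i).prod)) *
          (((g * (l.take i).prod)⁻¹ * (g * (l.take j).prod)) *
          ((g * (l.take j).prod)⁻¹ * (g * (l.take n).prod))) := by
        have : l.take n = l := List.take_of_length_le (by omega)
        simp only [this, hpr, List.take_zero, List.prod_nil]
        group
      have hN : n ≤ i + (wordLength S ((g * (l.take i).prod)⁻¹ * (g * (l.take j).prod))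
          + (n - j)) := by
        calc n = wordLength S (g⁻¹ * h) := hn
        _ ≤ wordLength S ((g * (l.take 0).prod)⁻¹ * (g * (l.take i).prod)) +
            wordLength S (((g * (l.take i).prod)⁻¹ * (g * (l.take j).prod)) *
              ((g * (l.take j).prod)⁻¹ * (g * (l.take n).prod))) := by
              rw [hsplit]; exact wordLength_mul_le hS _ _
        _ ≤ wordLength S ((g * (l.take 0).prod)⁻¹ * (g * (l.take i).prod)) +
            (wordLength S ((g * (l.take i).prod)⁻¹ * (g * (l.take j).prod)) +
            wordLength S ((g * (l.take j).prod)⁻¹ * (g * (l.take n).prod))) := by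
              gcongr
              exact wordLength_mul_le hS _ _
        _ ≤ i + (wordLength S ((g * (l.take i).prod)⁻¹ * (g * (l.take j).prod)) + (n - j)) := by
              have h1' : wordLength S ((g * (l.take 0).prod)⁻¹ * (g * (l.take i).prod)) ≤ i :=
                le_trans h1 (by omega)
              exact add_le_add h1' (add_le_add le_rfl h3)
      omega
    intro i hi j hj
    rcases le_total i j with hij | hij
    · have := keyeq i j hij hj
      rw [wordDist, this, Nat.cast_sub hij, abs_sub_comm,
        abs_of_nonneg (sub_nonneg.mpr (by exact_mod_cast hij : (i:ℝ) ≤ (j:ℝ)))]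
    · have := keyeq j i hij hi
      rw [wordDist, ← wordLength_inv hS]
      have hrw : ((g * (l.take i).prod)⁻¹ * (g * (l.take j).prod))⁻¹
          = (g * (l.take j).prod)⁻¹ * (g * (l.take i).prod) := by group
      rw [hrw, this, Nat.cast_sub hij,
        abs_of_nonneg (sub_nonneg.mpr (by exact_mod_cast hij : (j:ℝ) ≤ (i:ℝ)))]

/-- Word lengths w.r.t. two generating sets are comparable. -/
lemma exists_comparison (hSfin : S.Finite) (hS : Subgroup.closure S = ⊤)
    {S' : Set G} (hS' : Subgroup.closure S' = ⊤) :
    ∃ C : ℕ, 1 ≤ C ∧ ∀ g : G, wordLength S' g ≤ C * wordLength S g := by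
  set C := 1 + hSfin.toFinset.sup (wordLength S') with hC
  refine ⟨C, by omega, ?_⟩
  have hbound : ∀ x : G, (x ∈ S ∨ x⁻¹ ∈ S) → wordLength S' x ≤ C := by
    intro x hx
    rcases hx with h | h
    · exact le_trans (Finset.le_sup (hSfin.mem_toFinset.mpr h)) (by omega)
    · rw [← wordLength_inv hS' x]
      exact le_trans (Finset.le_sup (hSfin.mem_toFinset.mpr h)) (by omega)
  intro g
  obtain ⟨l, hl, hlen, hpr⟩ := wordLength_spec hS g
  rw [← hlen, ← hpr]
  clear hlen hpr
  induction l with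
  | nil => simp [wordLength_one]
  | cons a t ih =>
    have ha : wordLength S' a ≤ C := hbound a (hl a (by simp))
    have ht := ih (fun x hx => hl x (List.mem_cons_of_mem a hx))
    calc wordLength S' (a :: t).prod = wordLength S' (a * t.prod) := by rw [List.prod_cons]
    _ ≤ wordLength S' a + wordLength S' t.prod := wordLength_mul_le hS' _ _
    _ ≤ C + C * t.length := by omega
    _ = C * (a :: t).length := by simp [List.length_cons]; ring

end WL


section Stable

variable {G : Type*} [Group G] {H : Subgroup G}

lemma telescope_list (f : ℕ → H) (n : ℕ) :
    ∃ l : List H, (∀ y ∈ l, ∃ i, i < n ∧ y = (f i)⁻¹ * f (i + 1)) ∧ l.length = n ∧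
      l.prod = (f 0)⁻¹ * f n := by
  induction n with
  | zero => exact ⟨[], by simp, by simp, by simp⟩
  | succ n ih =>
    obtain ⟨l, h1, h2, h3⟩ := ih
    refine ⟨l ++ [(f n)⁻¹ * f (n + 1)], ?_, by simp [h2], ?_⟩
    · intro y hy
      rcases List.mem_append.mp hy with h | h
      · obtain ⟨i, hi, hy⟩ := h1 y h
        exact ⟨i, by omega, hy⟩
      · exact ⟨n, by omega, by simpa using h⟩
    · rw [List.prod_append, h3]
      simp only [List.prod_cons, List.prod_nil, mul_one]
      group

/-- The key representation lemma coming from stability (μ-quasiconvexity). -/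
lemma stable_rep {S₀ : Set G} (hS₀ : Subgroup.closure S₀ = ⊤) {M : ℝ → ℝ → ℝ} {μ : ℝ}
    (hst : IsStableSubgroupWith S₀ H M μ) (x : H) :
    ∃ l : List H, (∀ y ∈ l, wordLength S₀ (y : G) ≤ ⌈2 * μ + 1⌉₊) ∧
      l.length = wordLength S₀ (x : G) + 2 ∧ l.prod = x := by
  obtain ⟨hM, hμ, hmain⟩ := hst
  set N := ⌈2 * μ + 1⌉₊ with hN
  have hμN : μ ≤ (N : ℝ) := le_trans (by linarith) (Nat.le_ceil (2 * μ + 1))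
  obtain ⟨γ, hγ0, hγn, hgeo⟩ := exists_geodesic_seq hS₀ 1 (x : G)
  simp only [inv_one, one_mul] at hγn hgeo
  set n := wordLength S₀ (x : G) with hn
  obtain ⟨-, hnbr⟩ := hmain γ n hgeo (hγ0 ▸ H.one_mem) (hγn ▸ x.2)
  have hp : ∀ i : ℕ, ∃ h : H, i ≤ n → wordDist S₀ (γ i) (h : G) ≤ μ := by
    intro i
    by_cases hi : i ≤ n
    · obtain ⟨h, hh, hd⟩ := hnbr i hi
      exact ⟨⟨h, hh⟩, fun _ => hd⟩
    · exact ⟨1, fun h => absurd h hi⟩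
  choose p hp' using hp
  -- distance of p i to γ i
  have hdist : ∀ i, i ≤ n → (wordLength S₀ ((γ i)⁻¹ * (p i : G)) : ℝ) ≤ μ := fun i hi => hp' i hi
  -- the step bound
  have hstep : ∀ i, i + 1 ≤ n → (wordLength S₀ ((γ i)⁻¹ * γ (i + 1)) : ℝ) = 1 := by
    intro i hi
    have := hgeo i (by omega) (i + 1) hi
    rw [wordDist] at this
    rw [this]
    push_cast
    rw [abs_sub_comm]
    simp
  -- the letters q i
  have hq : ∀ i, i + 1 ≤ n → wordLength S₀ (((p i)⁻¹ * p (i + 1) : H) : G) ≤ N := by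
    intro i hi
    have hident : (((p i)⁻¹ * p (i + 1) : H) : G) =
        ((γ i)⁻¹ * (p i : G))⁻¹ * (((γ i)⁻¹ * γ (i + 1)) * ((γ (i + 1))⁻¹ * (p (i + 1) : G))) := by
      push_cast
      group
    have h1 : wordLength S₀ (((p i)⁻¹ * p (i + 1) : H) : G) ≤
        wordLength S₀ (((γ i)⁻¹ * (p i : G))⁻¹) +
        (wordLength S₀ ((γ i)⁻¹ * γ (i + 1)) + wordLength S₀ ((γ (i + 1))⁻¹ * (p (i + 1) : G))) := by
      rw [hident]
      exact le_trans (wordLength_mul_le hS₀ _ _) (by gcongr; exact wordLength_mul_le hS₀ _ _)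
    rw [wordLength_inv hS₀] at h1
    have hcast : (wordLength S₀ (((p i)⁻¹ * p (i + 1) : H) : G) : ℝ) ≤ (N : ℝ) := by
      calc (wordLength S₀ (((p i)⁻¹ * p (i + 1) : H) : G) : ℝ)
          ≤ (wordLength S₀ ((γ i)⁻¹ * (p i : G)) : ℝ) +
            ((wordLength S₀ ((γ i)⁻¹ * γ (i + 1)) : ℝ) +
             (wordLength S₀ ((γ (i + 1))⁻¹ * (p (i + 1) : G)) : ℝ)) := by exact_mod_cast h1
      _ ≤ μ + (1 + μ) := by
          have := hdist i (by omega)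
          have := hdist (i + 1) hi
          have := hstep i hi
          gcongr <;> simp_all
      _ ≤ N := le_trans (by linarith) (Nat.le_ceil (2 * μ + 1))
    exact_mod_cast hcast
  -- telescoping list
  obtain ⟨l, hl1, hl2, hl3⟩ := telescope_list p n
  refine ⟨[p 0] ++ l ++ [(p n)⁻¹ * x], ?_, by simp [hl2], ?_⟩
  · intro y hy
    simp only [List.mem_append, List.mem_singleton, List.mem_cons, List.not_mem_nil,
      or_false] at hy
    rcases hy with (hy | hy) | hy
    · subst hy
      have h0 : ((p 0 : H) : G) = (γ 0)⁻¹ * (p 0 : G) := by rw [hγ0]; group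
      rw [h0]
      have := hdist 0 (Nat.zero_le _)
      exact_mod_cast le_trans this hμN
    · obtain ⟨i, hi, rfl⟩ := hl1 y hy
      exact hq i hi
    · subst hy
      have h0 : (((p n)⁻¹ * x : H) : G) = ((γ n)⁻¹ * (p n : G))⁻¹ := by
        rw [hγn]; push_cast; group
      rw [h0, wordLength_inv hS₀]
      have := hdist n le_rfl
      exact_mod_cast le_trans this hμN
  · rw [List.prod_append, List.prod_append, hl3]
    simp only [List.prod_cons, List.prod_nil, mul_one]
    group

/-- Comparison of `S₀`-length of the image with `T`-length, when `T`-letters are short. -/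
lemma coe_wordLength_le {S₀ : Set G} (hS₀ : Subgroup.closure S₀ = ⊤)
    {T : Set H} (hT : Subgroup.closure T = ⊤) {N : ℕ}
    (hTb : ∀ t ∈ T, wordLength S₀ (t : G) ≤ N) (x : H) :
    wordLength S₀ (x : G) ≤ N * wordLength T x := by
  have hbound : ∀ y : H, (y ∈ T ∨ y⁻¹ ∈ T) → wordLength S₀ (y : G) ≤ N := by
    intro y hy
    rcases hy with h | h
    · exact hTb y h
    · rw [← wordLength_inv hS₀]
      exact_mod_cast hTb y⁻¹ h
  obtain ⟨l, hl, hlen, hpr⟩ := wordLength_spec hT x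
  rw [← hlen, ← hpr]
  clear hlen hpr
  induction l with
  | nil => simp [wordLength_one]
  | cons a t ih =>
    have ha : wordLength S₀ ((a : H) : G) ≤ N := hbound a (hl a (by simp))
    have ht := ih (fun y hy => hl y (List.mem_cons_of_mem a hy))
    have : (((a :: t).prod : H) : G) = (a : G) * ((t.prod : H) : G) := by push_cast; simp
    calc wordLength S₀ (((a :: t).prod : H) : G)
        = wordLength S₀ ((a : G) * ((t.prod : H) : G)) := by rw [this]
    _ ≤ wordLength S₀ ((a : H) : G) + wordLength S₀ ((t.prod : H) : G) := wordLength_mul_le hS₀ _ _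
    _ ≤ N + N * t.length := by omega
    _ = N * (a :: t).length := by simp [List.length_cons]; ring

end Stable


/-- **Lemma.** A stable subgroup of a finitely generated group is finitely generated
and undistorted: for any finite generating sets `T` of `H` and `S` of `G`, the
inclusion `(H, d_T) → (G, d_S)` is a quasi-isometric embedding. -/
theorem stable_is_fg_and_undistorted {G : Type*} [Group G] (hFG : Group.FG G)
    (H : Subgroup G) (hH : IsStableSubgroup H) :
    H.FG ∧ ∀ (T : Set H) (S : Set G), IsFinGenSet T → IsFinGenSet S →
      ∃ lam ≥ (1 : ℝ), ∃ c ≥ (0 : ℝ), ∀ x y : H,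
        wordDist S (x : G) (y : G) / lam - c ≤ wordDist T x y ∧
        wordDist T x y ≤ lam * wordDist S (x : G) (y : G) + c := by
  obtain ⟨S₀, ⟨hS₀fin, hS₀gen⟩, M, μ, hst⟩ := hH
  set N := ⌈2 * μ + 1⌉₊ with hNdef
  set T : Set H := {h : H | wordLength S₀ (h : G) ≤ N} with hTdef
  have hTgen : Subgroup.closure T = ⊤ := by
    rw [Subgroup.eq_top_iff']
    intro x
    obtain ⟨l, hl, -, hpr⟩ := stable_rep hS₀gen hst x
    rw [← hpr]
    exact list_prod_mem (fun y hy => Subgroup.subset_closure (hl y hy))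
  have hTfin : T.Finite := by
    have h1 : T = Subtype.val ⁻¹' {g : G | wordLength S₀ g ≤ N} := rfl
    rw [h1]
    exact Set.Finite.preimage (Subtype.val_injective.injOn) (finite_ball hS₀gen hS₀fin N)
  have hTup : ∀ x : H, wordLength T x ≤ wordLength S₀ (x : G) + 2 := by
    intro x
    obtain ⟨l, hl, hlen, hpr⟩ := stable_rep hS₀gen hst x
    exact hlen ▸ wordLength_le (fun y hy => Or.inl (hl y hy)) hpr
  have hTdown : ∀ x : H, wordLength S₀ (x : G) ≤ N * wordLength T x :=
    coe_wordLength_le hS₀gen hTgen (fun t ht => ht)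
  constructor
  · rw [Subgroup.fg_iff]
    refine ⟨Subtype.val '' T, ?_, hTfin.image _⟩
    have h2 : Subtype.val '' T = (H.subtype) '' T := rfl
    rw [h2, ← MonoidHom.map_closure, hTgen, ← MonoidHom.range_eq_map, Subgroup.range_subtype]
  · intro T' S' hT' hS'
    obtain ⟨A, hA1, hA⟩ := exists_comparison hS₀fin hS₀gen hS'.2
    obtain ⟨A', hA'1, hA'⟩ := exists_comparison hS'.1 hS'.2 hS₀gen
    obtain ⟨B, hB1, hB⟩ := exists_comparison hT'.1 hT'.2 hTgen
    obtain ⟨B', hB'1, hB'⟩ := exists_comparison hTfin hTgen hT'.2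
    set lamn : ℕ := max (A * (N * B)) (B' * A') with hlamn
    have hlamn1 : 1 ≤ lamn := le_trans (Nat.one_le_iff_ne_zero.mpr (by positivity))
      (le_max_right _ _)
    refine ⟨(lamn : ℝ), by exact_mod_cast hlamn1, ((2 * B' : ℕ) : ℝ), by positivity, ?_⟩
    intro x y
    set z := x⁻¹ * y with hz
    have hzc : ((z : H) : G) = (x : G)⁻¹ * (y : G) := by push_cast; rfl
    have low_nat : wordLength S' ((z : H) : G) ≤ lamn * wordLength T' z := by
      calc wordLength S' ((z : H) : G) ≤ A * wordLength S₀ ((z : H) : G) := hA _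
      _ ≤ A * (N * wordLength T z) := Nat.mul_le_mul_left _ (hTdown z)
      _ ≤ A * (N * (B * wordLength T' z)) := Nat.mul_le_mul_left _ (Nat.mul_le_mul_left _ (hB z))
      _ = (A * (N * B)) * wordLength T' z := by ring
      _ ≤ lamn * wordLength T' z := Nat.mul_le_mul_right _ (le_max_left _ _)
    have up_nat : wordLength T' z ≤ lamn * wordLength S' ((z : H) : G) + 2 * B' := by
      calc wordLength T' z ≤ B' * wordLength T z := hB' _
      _ ≤ B' * (wordLength S₀ ((z : H) : G) + 2) := Nat.mul_le_mul_left _ (hTup z)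
      _ = B' * wordLength S₀ ((z : H) : G) + 2 * B' := by ring
      _ ≤ B' * (A' * wordLength S' ((z : H) : G)) + 2 * B' := Nat.add_le_add_right (Nat.mul_le_mul_left _ (hA' _)) _
      _ = (B' * A') * wordLength S' ((z : H) : G) + 2 * B' := by ring
      _ ≤ lamn * wordLength S' ((z : H) : G) + 2 * B' :=
          Nat.add_le_add_right (Nat.mul_le_mul_right _ (le_max_right _ _)) _
    have hdT : wordDist T' x y = (wordLength T' z : ℝ) := rfl
    have hdS : wordDist S' (x : G) (y : G) = (wordLength S' ((z : H) : G) : ℝ) := by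
      rw [wordDist, hzc]
    rw [hdT, hdS]
    have hpos : (0 : ℝ) < (lamn : ℝ) := by exact_mod_cast hlamn1
    have hlow : (wordLength S' ((z : H) : G) : ℝ) ≤ (lamn : ℝ) * wordLength T' z := by
      exact_mod_cast low_nat
    have hup : (wordLength T' z : ℝ) ≤ (lamn : ℝ) * wordLength S' ((z : H) : G) + (2 * B' : ℕ) := by
      exact_mod_cast up_nat
    constructor
    · have hdiv : (wordLength S' ((z : H) : G) : ℝ) / (lamn : ℝ) ≤ wordLength T' z := by
        rw [div_le_iff₀ hpos]
        calc (wordLength S' ((z : H) : G) : ℝ) ≤ (lamn : ℝ) * wordLength T' z := hlow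
        _ = (wordLength T' z : ℝ) * lamn := by ring
      have hc : (0 : ℝ) ≤ ((2 * B' : ℕ) : ℝ) := by positivity
      linarith
    · exact hup
end

section
/- Let X be a geodesic metric space, let ε ≥ 0 and L > 0, and let p = p₁ ∗ p₂ ∗ ⋯ ∗ pₙ be a concatenation of geodesics parametrised by arclength, where pᵢ goes from aᵢ to aᵢ₊₁. Suppose that ℓ(pᵢ) ≥ L + ε for all i = 2, …, n−1 and that the Gromov product satisfies ⟨a_{i−1}, a_{i+1}⟩_{aᵢ} ≤ ε for all i = 2, …, n. Then p is an (L;1,2ε)-local quasigeodesic, i.e., every subpath of p of parametrised length at most L is a (1,2ε)-quasigeodesic. -/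
open Set

private lemma smono_aux (n : ℕ) (s : ℕ → ℝ) (hmono : ∀ i < n, s i ≤ s (i + 1)) :
    ∀ i j, i ≤ j → j ≤ n → s i ≤ s j := by
  intro i j hij hjn
  induction j with
  | zero =>
    have : i = 0 := Nat.le_zero.mp hij
    simp [this]
  | succ m ih =>
    rcases Nat.lt_or_ge i (m + 1) with h | h
    · exact le_trans (ih (by omega) (by omega)) (hmono m (by omega))
    · have : i = m + 1 := le_antisymm hij h
      simp [this]

private lemma locate_aux (n : ℕ) (s : ℕ → ℝ) (hmono : ∀ i < n, s i ≤ s (i + 1)) :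
    ∀ t : ℝ, 1 ≤ n → s 0 ≤ t → t ≤ s n → ∃ i < n, s i ≤ t ∧ t ≤ s (i + 1) := by
  induction n with
  | zero => intro t h; omega
  | succ m ih =>
    intro t _ h0 hn
    rcases le_or_gt t (s m) with h | h
    · rcases Nat.eq_zero_or_pos m with rfl | hm
      · exact ⟨0, by omega, h0, le_trans h (hmono 0 (by omega))⟩
      · obtain ⟨i, hi, h1, h2⟩ := ih (fun i hi => hmono i (by omega)) t hm h0 h
        exact ⟨i, by omega, h1, h2⟩
    · exact ⟨m, by omega, le_of_lt h, hn⟩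

/-- A concatenation of geodesics (parametrised by arclength) whose middle segments
have length at least `L + ε` and whose Gromov products at the concatenation points
are at most `ε` is an `(L; 1, 2ε)`-local quasigeodesic. -/
theorem concatenation_is_local_quasigeodesic {X : Type*} [MetricSpace X]
    (hX : IsGeodesicSpace X) (ε L : ℝ) (hε : 0 ≤ ε) (hL : 0 < L)
    (n : ℕ) (s : ℕ → ℝ) (p : ℝ → X)
    (hmono : ∀ i < n, s i ≤ s (i + 1))
    (hgeo : ∀ i < n, IsGeodesicOn dist p (Set.Icc (s i) (s (i + 1))))
    (hlen : ∀ i : ℕ, 1 ≤ i → i + 1 < n → L + ε ≤ s (i + 1) - s i)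
    (hgp : ∀ i : ℕ, 1 ≤ i → i < n →
        gromovProd dist (p (s i)) (p (s (i - 1))) (p (s (i + 1))) ≤ ε) :
    ∀ t₁ t₂ : ℝ, s 0 ≤ t₁ → t₁ ≤ t₂ → t₂ ≤ s n → t₂ - t₁ ≤ L →
      IsQuasigeodesicOn dist p (Set.Icc t₁ t₂) 1 (2 * ε) := by
  intro t₁ t₂ ht₁ ht12 ht₂ htL
  have key : ∀ u v : ℝ, t₁ ≤ u → u ≤ v → v ≤ t₂ →
      v - u - 2 * ε ≤ dist (p u) (p v) ∧ dist (p u) (p v) ≤ v - u + 2 * ε := by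
    intro u v hu huv hv
    have hu0 : s 0 ≤ u := le_trans ht₁ hu
    have hvn : v ≤ s n := le_trans hv ht₂
    rcases Nat.eq_zero_or_pos n with rfl | hn
    · have h1 : u = s 0 := le_antisymm (le_trans huv hvn) hu0
      have h2 : v = s 0 := le_antisymm hvn (le_trans hu0 huv)
      rw [h1, h2, dist_self]
      constructor <;> linarith
    obtain ⟨i, hi, hui, hui'⟩ := locate_aux n s hmono u hn hu0 (le_trans huv hvn)
    rcases le_or_gt v (s (i + 1)) with hcase | hcase
    · -- same segment
      have hd := hgeo i hi u ⟨hui, hui'⟩ v ⟨le_trans hui huv, hcase⟩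
      rw [abs_of_nonpos (by linarith)] at hd
      constructor <;> linarith
    · have hkn : i + 1 < n := by
        by_contra h'
        have : i + 1 = n := by omega
        rw [this] at hcase; linarith
      rcases le_or_gt v (s (i + 2)) with hcase2 | hcase2
      · -- v in segment i+1
        have hgp' := hgp (i + 1) (by omega) hkn
        simp only [Nat.add_sub_cancel] at hgp'
        have g1 := hgeo i hi
        have g2 := hgeo (i + 1) hkn
        have hs1 : s i ≤ s (i + 1) := hmono i hi
        have hs2 : s (i + 1) ≤ s (i + 2) := hmono (i + 1) hkn
        have d1 : dist (p u) (p (s (i + 1))) = s (i + 1) - u := by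
          rw [g1 u ⟨hui, hui'⟩ (s (i + 1)) ⟨hs1, le_refl _⟩,
            abs_of_nonpos (by linarith)]; ring
        have d2 : dist (p (s i)) (p u) = u - s i := by
          rw [g1 (s i) ⟨le_refl _, hs1⟩ u ⟨hui, hui'⟩,
            abs_of_nonpos (by linarith)]; ring
        have d3 : dist (p (s i)) (p (s (i + 1))) = s (i + 1) - s i := by
          rw [g1 (s i) ⟨le_refl _, hs1⟩ (s (i + 1)) ⟨hs1, le_refl _⟩,
            abs_of_nonpos (by linarith)]; ring
        have d4 : dist (p (s (i + 1))) (p v) = v - s (i + 1) := by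
          rw [g2 (s (i + 1)) ⟨le_refl _, hs2⟩ v ⟨le_of_lt hcase, hcase2⟩,
            abs_of_nonpos (by linarith)]; ring
        have d5 : dist (p v) (p (s (i + 2))) = s (i + 2) - v := by
          rw [g2 v ⟨le_of_lt hcase, hcase2⟩ (s (i + 2)) ⟨hs2, le_refl _⟩,
            abs_of_nonpos (by linarith)]; ring
        have d6 : dist (p (s (i + 1))) (p (s (i + 2))) = s (i + 2) - s (i + 1) := by
          rw [g2 (s (i + 1)) ⟨le_refl _, hs2⟩ (s (i + 2)) ⟨hs2, le_refl _⟩,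
            abs_of_nonpos (by linarith)]; ring
        have hg : dist (p (s i)) (p (s (i + 2))) ≥
            dist (p (s (i + 1))) (p (s i)) + dist (p (s (i + 1))) (p (s (i + 2))) - 2 * ε := by
          unfold gromovProd at hgp'; linarith
        have t1 := dist_triangle (p (s i)) (p u) (p v)
        have t2 := dist_triangle (p (s i)) (p v) (p (s (i + 2)))
        have t3 := dist_triangle (p u) (p (s (i + 1))) (p v)
        have hc := dist_comm (p (s i)) (p (s (i + 1)))
        constructor <;> linarith
      · -- impossible: a whole middle segment inside [u, v]
        exfalso
        have hk1 : i + 2 < n := by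
          by_contra h'
          have : i + 2 = n := by omega
          rw [this] at hcase2; linarith
        have := hlen (i + 1) (by omega) (by omega)
        have hvu : v - u ≤ L := by linarith
        linarith
  intro x hx y hy
  simp only [div_one, one_mul]
  rcases le_total x y with h | h
  · obtain ⟨h1, h2⟩ := key x y hx.1 h hy.2
    rw [abs_of_nonpos (by linarith)]
    constructor <;> linarith
  · obtain ⟨h1, h2⟩ := key y x hy.1 h hx.2
    rw [abs_of_nonneg (by linarith), dist_comm]
    constructor <;> linarith
end
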